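/- arXiv:0810.2865 — 10 statements merged into one kernel-verified Lean document; each statement's English description precedes it below -/
import Mathlib

section
/- For any tax-based mechanism t, the mechanism t^BCGC obtained by the BCGC transformation is feasible: for every type vector θ, the sum over all players i of t_i^BCGC(θ) is at most 0. -/
/-! Each `S i θ` dominates `T θ` (take the deviation `θ i` itself), so the `n` shares
`S i θ / n` together collect at least the total tax `T θ`. -/

open Finset

theorem sum_sub_div_card_nonpos {ι : Type*} [Fintype ι] (a s : ι → ℝ)
    (h : ∀ i, ∑ j, a j ≤ s i) : ∑ i, (a i - s i / Fintype.card ι) ≤ 0 := by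
  rcases isEmpty_or_nonempty ι with hι | hι
  · simp
  have hcard : (0 : ℝ) < Fintype.card ι := by exact_mod_cast Fintype.card_pos
  calc ∑ i, (a i - s i / Fintype.card ι)
      = ∑ j, a j - (∑ i, s i) / Fintype.card ι := by rw [sum_sub_distrib, sum_div]
    _ ≤ ∑ j, a j - (∑ _i : ι, ∑ j, a j) / Fintype.card ι := by gcongr with i; exact h i
    _ = 0 := by
      rw [sum_const, card_univ, nsmul_eq_mul, mul_div_cancel_left₀ _ hcard.ne', sub_self]

theorem le_of_isGreatest_update {ι : Type*} [DecidableEq ι] {Θ : ι → Type*} (T : (∀ i, Θ i) → ℝ)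
    (θ : ∀ i, Θ i) (i : ι) {s : ℝ}
    (hs : IsGreatest {x : ℝ | ∃ θi' : Θ i, x = T (Function.update θ i θi')} s) : T θ ≤ s :=
  hs.2 ⟨θ i, by rw [Function.update_eq_self]⟩

theorem bcgc_feasible_general
    {n : ℕ} (Θ : Fin n → Type*)
    (t : (∀ i, Θ i) → Fin n → ℝ)
    (T : (∀ i, Θ i) → ℝ)
    (hT : ∀ θ, T θ = ∑ i, t θ i)
    (S : Fin n → (∀ i, Θ i) → ℝ)
    -- S i θ is the maximum over θ'_i of T (θ'_i, θ_{-i})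
    (hSmax : ∀ i : Fin n, ∀ θ : ∀ j, Θ j,
      IsGreatest {x : ℝ | ∃ θi' : Θ i, x = T (Function.update θ i θi')} (S i θ))
    (tBCGC : (∀ i, Θ i) → Fin n → ℝ)
    (htBCGC : ∀ θ i, tBCGC θ i = t θ i - S i θ / n) :
    ∀ θ : ∀ i, Θ i, ∑ i, tBCGC θ i ≤ 0 := by
  intro θ
  have hTS : ∀ i, ∑ j, t θ j ≤ S i θ := fun i =>
    hT θ ▸ le_of_isGreatest_update T θ i (hSmax i θ)
  simpa only [htBCGC, Fintype.card_fin] using sum_sub_div_card_nonpos (t θ) (S · θ) hTS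

/-- Any mechanism obtained by the BCGC transformation is feasible:
given a tax function `t`, total `T θ = ∑ i, t θ i`, and for each player `i` a
function `S i θ` depending only on `θ_{-i}` which is the maximum of
`T (θ'_i, θ_{-i})` over `θ'_i ∈ Θ i` (it is an upper bound and is attained),
the transformed taxes `t^BCGC i θ = t θ i − S i θ / n` satisfy
`∑ i, t^BCGC i θ ≤ 0` for every type vector `θ`. -/
theorem bcgc_feasible
    {n : ℕ} (hn : 2 ≤ n) (Θ : Fin n → Type*)
    (t : (∀ i, Θ i) → Fin n → ℝ)
    (T : (∀ i, Θ i) → ℝ)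
    (hT : ∀ θ, T θ = ∑ i, t θ i)
    (S : Fin n → (∀ i, Θ i) → ℝ)
    -- S i θ depends only on θ_{-i}
    (hSindep : ∀ i : Fin n, ∀ θ : ∀ j, Θ j, ∀ θi' : Θ i,
      S i (Function.update θ i θi') = S i θ)
    -- S i θ is the maximum over θ'_i of T (θ'_i, θ_{-i})
    (hSmax : ∀ i : Fin n, ∀ θ : ∀ j, Θ j,
      IsGreatest {x : ℝ | ∃ θi' : Θ i, x = T (Function.update θ i θi')} (S i θ))
    (tBCGC : (∀ i, Θ i) → Fin n → ℝ)
    (htBCGC : ∀ θ i, tBCGC θ i = t θ i - S i θ / n) :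
    ∀ θ : ∀ i, Θ i, ∑ i, tBCGC θ i ≤ 0 :=
  bcgc_feasible_general Θ t T hT S hSmax tBCGC htBCGC
end

section
/- Every Groves mechanism is efficient and strategy-proof: the decision function maximizes the sum of players' valuations, and for every player i, every true type θ_i, every report θ'_i, and every profile θ_{-i} of other reports, the final utility of player i from reporting θ_i is at least that from reporting θ'_i. -/
open Finset Function

/-
Fix the reports of the other players. A Groves tax pays player `i` the others' reported valuation
of the decision plus a term independent of `i`'s report, so `i`'s utility from any report equals
the total true valuation of the decision taken, up to that term. Truthful reporting makes `f`
maximize exactly this total valuation, so no misreport can do better.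
-/

section Groves

variable {ι D : Type*} [Fintype ι] [DecidableEq ι] {Θ : ι → Type*}

theorem add_sum_erase_update (v : ∀ i, D → Θ i → ℝ) (d : D) (θ : ∀ i, Θ i) (i : ι) (x : Θ i) :
    v i d (θ i) + ∑ j ∈ univ.erase i, v j d (update θ i x j) = ∑ j, v j d (θ j) := by
  have others : ∀ j ∈ univ.erase i, v j d (update θ i x j) = v j d (θ j) := fun j hj => by
    rw [update_of_ne (ne_of_mem_erase hj)]
  rw [sum_congr rfl others, add_sum_erase _ (fun j => v j d (θ j)) (mem_univ i)]

theorem groves_utility_update_eq (v : ∀ i, D → Θ i → ℝ) (f : (∀ i, Θ i) → D)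
    (h : ι → (∀ i, Θ i) → ℝ) (hindep : ∀ i θ (x : Θ i), h i (update θ i x) = h i θ)
    (t : (∀ i, Θ i) → ι → ℝ)
    (ht : ∀ θ i, t θ i = (∑ j ∈ univ.erase i, v j (f θ) (θ j)) + h i θ)
    (i : ι) (θ : ∀ i, Θ i) (x : Θ i) :
    v i (f (update θ i x)) (θ i) + t (update θ i x) i =
      ∑ j, v j (f (update θ i x)) (θ j) + h i θ := by
  rw [ht, hindep, ← add_assoc, add_sum_erase_update]

end Groves

theorem groves_efficient_and_strategyproof_general
    {n : ℕ} (D : Type*) (Θ : Fin n → Type*)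
    (v : ∀ i : Fin n, D → Θ i → ℝ)
    (f : (∀ i, Θ i) → D)
    (hf : ∀ θ : ∀ i, Θ i, ∀ d : D,
      ∑ i, v i d (θ i) ≤ ∑ i, v i (f θ) (θ i))
    (h : Fin n → (∀ i, Θ i) → ℝ)
    (hindep : ∀ i : Fin n, ∀ θ : ∀ j, Θ j, ∀ θi' : Θ i,
      h i (Function.update θ i θi') = h i θ)
    (t : (∀ i, Θ i) → Fin n → ℝ)
    (ht : ∀ θ i, t θ i = (∑ j ∈ Finset.univ.erase i, v j (f θ) (θ j)) + h i θ) :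
    -- efficiency
    (∀ θ : ∀ i, Θ i, ∀ d : D, ∑ i, v i d (θ i) ≤ ∑ i, v i (f θ) (θ i)) ∧
    -- strategy-proofness
    (∀ i : Fin n, ∀ θ : ∀ j, Θ j, ∀ θi' : Θ i,
      v i (f (Function.update θ i θi')) (θ i) + t (Function.update θ i θi') i ≤
        v i (f θ) (θ i) + t θ i) := by
  refine ⟨hf, fun i θ θi' => ?_⟩
  have truthful := groves_utility_update_eq v f h hindep t ht i θ (θ i)
  rw [update_eq_self] at truthful
  rw [groves_utility_update_eq v f h hindep t ht, truthful]
  exact add_le_add_left (hf θ _) _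

/-- Groves Theorem: every Groves mechanism is efficient and
strategy-proof.  The decision function `f` maximizes the total valuation, the
tax of player `i` is `t i θ = ∑_{j ≠ i} v j (f θ) (θ j) + h i θ` where `h i`
depends only on `θ_{-i}`, and the final utility of player `i` with true type
`θ i` at reported profile `θ'` is `v i (f θ') (θ i) + t i θ'`.  Conclusion:
`f` is efficient, and truthful reporting yields at least the utility of any
misreport `θi'`. -/
theorem groves_efficient_and_strategyproof
    {n : ℕ} (hn : 2 ≤ n) (D : Type*) (Θ : Fin n → Type*)
    (v : ∀ i : Fin n, D → Θ i → ℝ)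
    (f : (∀ i, Θ i) → D)
    (hf : ∀ θ : ∀ i, Θ i, ∀ d : D,
      ∑ i, v i d (θ i) ≤ ∑ i, v i (f θ) (θ i))
    (h : Fin n → (∀ i, Θ i) → ℝ)
    (hindep : ∀ i : Fin n, ∀ θ : ∀ j, Θ j, ∀ θi' : Θ i,
      h i (Function.update θ i θi') = h i θ)
    (t : (∀ i, Θ i) → Fin n → ℝ)
    (ht : ∀ θ i, t θ i = (∑ j ∈ Finset.univ.erase i, v j (f θ) (θ j)) + h i θ) :
    -- efficiency
    (∀ θ : ∀ i, Θ i, ∀ d : D, ∑ i, v i d (θ i) ≤ ∑ i, v i (f θ) (θ i)) ∧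
    -- strategy-proofness
    (∀ i : Fin n, ∀ θ : ∀ j, Θ j, ∀ θi' : Θ i,
      v i (f (Function.update θ i θi')) (θ i) + t (Function.update θ i θi') i ≤
        v i (f θ) (θ i) + t θ i) :=
  groves_efficient_and_strategyproof_general D Θ v f hf h hindep t ht
end

section
/- Let h = (h_1, ..., h_n) be a Groves mechanism where all type sets equal Θ_0, and define the symmetrized function h'(x) := (1/n!) Σ_{π ∈ Π(n−1)} Σ_{j=1}^n h_j(x^π) for x ∈ Θ_0^{n−1}, where x^π permutes coordinates by π. Suppose the optimal social welfare G(θ) := Σ_j v_j(f(θ), θ_j) is invariant under permutations of θ. Then: (i) if the Groves mechanism h is feasible, so is the anonymous Groves mechanism determined by h'; (ii) if an anonymous Groves mechanism h^0 is welfare dominated by h, then h^0 is welfare dominated by h'. -/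
/-!
The total tax of a Groves mechanism at `θ` is `k * G θ + ∑ i, h i θ₋ᵢ`. Averaging over all
reorderings `θ ∘ σ` of the profile turns `∑ i, h i (θ ∘ σ)₋ᵢ` into `∑ i, h' θ₋ᵢ`, because for
fixed `j` the map `σ ↦ (σ j, σ restricted to the complements of j and σ j)` is a bijection
`Perm (Fin (k + 1)) ≃ Fin (k + 1) × Perm (Fin k)`. Since `G` is symmetric, and so is
`∑ i, h0 θ₋ᵢ` for an anonymous `h0`, every inequality between total taxes that holds at all
reorderings of `θ` survives the averaging, and strictness at `σ = 1` makes the average strict.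
-/

open Finset
open scoped BigOperators

namespace Equiv.Perm

variable {k : ℕ}

def extendSuccAbove (j i : Fin (k + 1)) (π : Perm (Fin k)) : Perm (Fin (k + 1)) :=
  (finSuccEquiv' j).trans ((optionCongr π).trans (finSuccEquiv' i).symm)

@[simp]
lemma extendSuccAbove_apply_self (j i : Fin (k + 1)) (π : Perm (Fin k)) :
    extendSuccAbove j i π j = i := by
  simp [extendSuccAbove, finSuccEquiv'_at, finSuccEquiv'_symm_none]

@[simp]
lemma extendSuccAbove_apply_succAbove (j i : Fin (k + 1)) (π : Perm (Fin k)) (m : Fin k) :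
    extendSuccAbove j i π (j.succAbove m) = i.succAbove (π m) := by
  simp [extendSuccAbove, finSuccEquiv'_succAbove, finSuccEquiv'_symm_some]

lemma extendSuccAbove_comp_succAbove (j i : Fin (k + 1)) (π : Perm (Fin k)) :
    extendSuccAbove j i π ∘ j.succAbove = i.succAbove ∘ π :=
  funext (extendSuccAbove_apply_succAbove j i π)

lemma bijective_uncurry_extendSuccAbove (j : Fin (k + 1)) :
    Function.Bijective (Function.uncurry (extendSuccAbove (k := k) j)) := by
  rw [Fintype.bijective_iff_injective_and_card]
  refine ⟨?_, by simp [Fintype.card_perm, Nat.factorial_succ]⟩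
  rintro ⟨i, π⟩ ⟨i', π'⟩ hext
  simp only [Function.uncurry_apply_pair] at hext
  obtain rfl : i = i' := by
    rw [← extendSuccAbove_apply_self j i π, hext, extendSuccAbove_apply_self]
  obtain rfl : π = π' := ext fun m => Fin.succAbove_right_injective <| by
    rw [← extendSuccAbove_apply_succAbove, hext, extendSuccAbove_apply_succAbove]
  rfl

lemma exists_comp_succAbove_eq (σ : Perm (Fin (k + 1))) (j : Fin (k + 1)) :
    ∃ π : Perm (Fin k), σ ∘ j.succAbove = (σ j).succAbove ∘ π := by
  obtain ⟨⟨i, π⟩, rfl⟩ := (bijective_uncurry_extendSuccAbove j).2 σ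
  exact ⟨π, by simp only [Function.uncurry_apply_pair, extendSuccAbove_apply_self,
    extendSuccAbove_comp_succAbove]⟩

end Equiv.Perm

open Equiv

section LeaveOneOut

variable {k : ℕ} {α : Type*}

section AddCommMonoid

variable {M : Type*} [AddCommMonoid M]

lemma sum_perm_comp_succAbove (F : (Fin k → α) → M) (θ : Fin (k + 1) → α) (j : Fin (k + 1)) :
    ∑ σ : Perm (Fin (k + 1)), F ((θ ∘ σ) ∘ j.succAbove) =
      ∑ i : Fin (k + 1), ∑ π : Perm (Fin k), F ((θ ∘ i.succAbove) ∘ π) := by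
  rw [← Fintype.sum_prod_type']
  refine (Fintype.sum_bijective _ (Perm.bijective_uncurry_extendSuccAbove j) _ _ ?_).symm
  rintro ⟨i, π⟩
  simp only [Function.uncurry_apply_pair, Function.comp_assoc,
    Perm.extendSuccAbove_comp_succAbove]

def leaveOneOutSum (g : Fin (k + 1) → (Fin k → α) → M) (θ : Fin (k + 1) → α) : M :=
  ∑ i, g i (θ ∘ i.succAbove)

def symmetrizedSum (g : Fin (k + 1) → (Fin k → α) → M) (x : Fin k → α) : M :=
  ∑ π : Perm (Fin k), ∑ j, g j (x ∘ π)

lemma sum_perm_leaveOneOutSum (g : Fin (k + 1) → (Fin k → α) → M) (θ : Fin (k + 1) → α) :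
    ∑ σ : Perm (Fin (k + 1)), leaveOneOutSum g (θ ∘ σ) =
      leaveOneOutSum (fun _ => symmetrizedSum g) θ := by
  simp only [leaveOneOutSum, symmetrizedSum]
  rw [Finset.sum_comm]
  simp_rw [sum_perm_comp_succAbove]
  rw [Finset.sum_comm]
  exact Finset.sum_congr rfl fun i _ => Finset.sum_comm

lemma leaveOneOutSum_comp_perm {g : (Fin k → α) → M}
    (hg : ∀ x (π : Perm (Fin k)), g (x ∘ π) = g x) (θ : Fin (k + 1) → α) (σ : Perm (Fin (k + 1))) :
    leaveOneOutSum (fun _ => g) (θ ∘ σ) = leaveOneOutSum (fun _ => g) θ := by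
  unfold leaveOneOutSum
  calc ∑ i : Fin (k + 1), g (θ ∘ σ ∘ i.succAbove) = ∑ i, g (θ ∘ (σ i).succAbove) := by
        refine Finset.sum_congr rfl fun i _ => ?_
        obtain ⟨π, hπ⟩ := Perm.exists_comp_succAbove_eq σ i
        rw [hπ, ← Function.comp_assoc, hg]
    _ = ∑ i : Fin (k + 1), g (θ ∘ i.succAbove) := Equiv.sum_comp σ fun i => g (θ ∘ i.succAbove)

end AddCommMonoid

noncomputable def symmetrize (g : Fin (k + 1) → (Fin k → α) → ℝ) (x : Fin k → α) : ℝ :=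
  symmetrizedSum g x / (k + 1).factorial

lemma leaveOneOutSum_symmetrize (g : Fin (k + 1) → (Fin k → α) → ℝ) (θ : Fin (k + 1) → α) :
    leaveOneOutSum (fun _ => symmetrize g) θ =
      𝔼 σ : Perm (Fin (k + 1)), leaveOneOutSum g (θ ∘ σ) := by
  rw [Fintype.expect_eq_sum_div_card, Fintype.card_perm, Fintype.card_fin, sum_perm_leaveOneOutSum,
    leaveOneOutSum, leaveOneOutSum, Finset.sum_div]
  rfl

lemma sum_grovesTax_eq {G : (Fin (k + 1) → α) → ℝ}
    {w : (Fin (k + 1) → α) → Fin (k + 1) → ℝ} (hG : ∀ θ, G θ = ∑ i, w θ i)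
    {g : Fin (k + 1) → (Fin k → α) → ℝ} {τ : (Fin (k + 1) → α) → Fin (k + 1) → ℝ}
    (hτ : ∀ θ i, τ θ i = (G θ - w θ i) + g i (θ ∘ i.succAbove)) (θ : Fin (k + 1) → α) :
    ∑ i, τ θ i = k * G θ + leaveOneOutSum g θ := by
  simp only [hτ, leaveOneOutSum]
  rw [Finset.sum_add_distrib, Finset.sum_sub_distrib, Finset.sum_const, Finset.card_univ,
    Fintype.card_fin, nsmul_eq_mul, ← hG]
  push_cast
  ring

end LeaveOneOut

theorem symmetrization_lemma_general
    {k : ℕ} (D : Type*) (Θ0 : Type*)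
    (v : D → Θ0 → ℝ)
    (f : (Fin (k + 1) → Θ0) → D)
    (G : (Fin (k + 1) → Θ0) → ℝ)
    (hG : ∀ θ, G θ = ∑ i, v (f θ) (θ i))
    (hGinv : ∀ θ : Fin (k + 1) → Θ0, ∀ π : Equiv.Perm (Fin (k + 1)),
      G (θ ∘ π) = G θ)
    (h : Fin (k + 1) → (Fin k → Θ0) → ℝ)
    (t : (Fin (k + 1) → Θ0) → Fin (k + 1) → ℝ)
    (ht : ∀ θ i, t θ i = (G θ - v (f θ) (θ i)) + h i (θ ∘ i.succAbove))
    (h' : (Fin k → Θ0) → ℝ)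
    (hh' : ∀ x : Fin k → Θ0,
      h' x = (∑ π : Equiv.Perm (Fin k), ∑ j, h j (x ∘ π)) / (Nat.factorial (k + 1)))
    (t' : (Fin (k + 1) → Θ0) → Fin (k + 1) → ℝ)
    (ht' : ∀ θ i, t' θ i = (G θ - v (f θ) (θ i)) + h' (θ ∘ i.succAbove)) :
    -- (i) feasibility transfers from h to h'
    ((∀ θ, ∑ i, t θ i ≤ 0) → ∀ θ, ∑ i, t' θ i ≤ 0) ∧
    -- (ii) if an anonymous mechanism h0 is welfare dominated by h,
    -- it is welfare dominated by h'
    (∀ h0 : (Fin k → Θ0) → ℝ,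
      (∀ (x : Fin k → Θ0) (π : Equiv.Perm (Fin k)), h0 (x ∘ π) = h0 x) →
      ∀ t0 : (Fin (k + 1) → Θ0) → Fin (k + 1) → ℝ,
        (∀ θ i, t0 θ i = (G θ - v (f θ) (θ i)) + h0 (θ ∘ i.succAbove)) →
        ((∀ θ, ∑ i, t0 θ i ≤ ∑ i, t θ i) ∧ (∃ θ, ∑ i, t0 θ i < ∑ i, t θ i)) →
        ((∀ θ, ∑ i, t0 θ i ≤ ∑ i, t' θ i) ∧
          (∃ θ, ∑ i, t0 θ i < ∑ i, t' θ i))) := by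
  obtain rfl : h' = symmetrize h := funext hh'
  refine ⟨fun feasible θ => ?_, fun h0 anonymous t0 ht0 ⟨dominated, θ₀, strictly⟩ => ?_⟩
  · have bound : ∀ σ : Perm (Fin (k + 1)), leaveOneOutSum h (θ ∘ σ) ≤ -(k * G θ) := fun σ => by
      have := feasible (θ ∘ σ)
      rw [sum_grovesTax_eq hG ht, hGinv] at this
      linarith
    have := expect_le univ_nonempty fun σ _ => bound σ
    rw [sum_grovesTax_eq hG ht', leaveOneOutSum_symmetrize]
    linarith
  · have pointwise : ∀ θ (σ : Perm (Fin (k + 1))),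
        leaveOneOutSum (fun _ => h0) θ ≤ leaveOneOutSum h (θ ∘ σ) := fun θ σ => by
      have := dominated (θ ∘ σ)
      rw [sum_grovesTax_eq hG ht0, sum_grovesTax_eq hG ht,
        leaveOneOutSum_comp_perm anonymous] at this
      linarith
    refine ⟨fun θ => ?_, θ₀, ?_⟩
    · have := le_expect univ_nonempty fun σ _ => pointwise θ σ
      rw [sum_grovesTax_eq hG ht0, sum_grovesTax_eq hG ht', leaveOneOutSum_symmetrize]
      linarith
    · rw [sum_grovesTax_eq hG ht0, sum_grovesTax_eq hG ht] at strictly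
      have := lt_expect (fun σ _ => pointwise θ₀ σ) ⟨1, mem_univ _, by simpa using strictly⟩
      rw [sum_grovesTax_eq hG ht0, sum_grovesTax_eq hG ht', leaveOneOutSum_symmetrize]
      linarith

/-- symmetrization lemma for Groves mechanisms.  There are
`k + 1 ≥ 2` players with a common type space `Θ0` and a common valuation
`v : D → Θ0 → ℝ`.  A Groves mechanism is given by `h : Fin (k+1) → (Fin k → Θ0) → ℝ`,
with taxes `t i θ = (G θ − v (f θ) (θ i)) + h i (θ_{-i})` where
`G θ = ∑ j, v (f θ) (θ j)` and `θ_{-i} = θ ∘ i.succAbove`.  Define the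
symmetrization `h' x = (1/(k+1)!) ∑_{π ∈ Perm (Fin k)} ∑_j h j (x ∘ π)`.
Assume `G` is permutation invariant.  Then (i) if `h` is feasible so is the
anonymous mechanism determined by `h'`; (ii) if an anonymous Groves mechanism
`h0` is welfare dominated by `h`, then it is welfare dominated by `h'`. -/
theorem symmetrization_lemma
    {k : ℕ} (hk : 1 ≤ k) (D : Type*) (Θ0 : Type*)
    (v : D → Θ0 → ℝ)
    (f : (Fin (k + 1) → Θ0) → D)
    (hf : ∀ θ : Fin (k + 1) → Θ0, ∀ d : D,
      ∑ i, v d (θ i) ≤ ∑ i, v (f θ) (θ i))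
    (G : (Fin (k + 1) → Θ0) → ℝ)
    (hG : ∀ θ, G θ = ∑ i, v (f θ) (θ i))
    (hGinv : ∀ θ : Fin (k + 1) → Θ0, ∀ π : Equiv.Perm (Fin (k + 1)),
      G (θ ∘ π) = G θ)
    (h : Fin (k + 1) → (Fin k → Θ0) → ℝ)
    (t : (Fin (k + 1) → Θ0) → Fin (k + 1) → ℝ)
    (ht : ∀ θ i, t θ i = (G θ - v (f θ) (θ i)) + h i (θ ∘ i.succAbove))
    (h' : (Fin k → Θ0) → ℝ)
    (hh' : ∀ x : Fin k → Θ0,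
      h' x = (∑ π : Equiv.Perm (Fin k), ∑ j, h j (x ∘ π)) / (Nat.factorial (k + 1)))
    (t' : (Fin (k + 1) → Θ0) → Fin (k + 1) → ℝ)
    (ht' : ∀ θ i, t' θ i = (G θ - v (f θ) (θ i)) + h' (θ ∘ i.succAbove)) :
    -- (i) feasibility transfers from h to h'
    ((∀ θ, ∑ i, t θ i ≤ 0) → ∀ θ, ∑ i, t' θ i ≤ 0) ∧
    -- (ii) if an anonymous mechanism h0 is welfare dominated by h,
    -- it is welfare dominated by h'
    (∀ h0 : (Fin k → Θ0) → ℝ,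
      (∀ (x : Fin k → Θ0) (π : Equiv.Perm (Fin k)), h0 (x ∘ π) = h0 x) →
      ∀ t0 : (Fin (k + 1) → Θ0) → Fin (k + 1) → ℝ,
        (∀ θ i, t0 θ i = (G θ - v (f θ) (θ i)) + h0 (θ ∘ i.succAbove)) →
        ((∀ θ, ∑ i, t0 θ i ≤ ∑ i, t θ i) ∧ (∃ θ, ∑ i, t0 θ i < ∑ i, t θ i)) →
        ((∀ θ, ∑ i, t0 θ i ≤ ∑ i, t' θ i) ∧
          (∃ θ, ∑ i, t0 θ i < ∑ i, t' θ i))) :=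
  symmetrization_lemma_general D Θ0 v f G hG hGinv h t ht h' hh' t' ht'
end

section
/- In a multi-unit auction with m units and n unit-demand bidders with bids in [L,U], the Bailey-Cavallo mechanism (the OEL mechanism with index k = m+1), which charges each bidder their VCG payment minus (m/n) times the (m+1)-th highest bid among the other bidders, is feasible: its total payment Σ_i t_i^{OEL}(θ) ≤ 0 for all θ, with equality whenever [θ]_{m+1} = [θ]_{m+2}. -/
/-! Deleting one bid from the sorted list of all bids shifts every position by at most one place,
so `[θ_{-i}]_{m+1}` lies between `[θ]_{m+2}` and `[θ]_{m+1}`. Summing over the `n` bidders, the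
rebates `(m/n) ∑ i, [θ_{-i}]_{m+1}` are at most the VCG revenue `m [θ]_{m+1}`, and they equal it
when `[θ]_{m+1} = [θ]_{m+2}`. -/

/-- The `k`-th highest element (1-indexed) of a multiset of reals. -/
noncomputable def kthHighest (m : Multiset ℝ) (k : ℕ) : ℝ :=
  (m.sort (· ≤ ·)).getD (Multiset.card m - k) 0

def allBids {n : ℕ} (θ : Fin n → ℝ) : Multiset ℝ :=
  (Finset.univ.val : Multiset (Fin n)).map θ

def otherBids {n : ℕ} (θ : Fin n → ℝ) (i : Fin n) : Multiset ℝ :=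
  ((Finset.univ.erase i).val : Multiset (Fin n)).map θ

theorem List.Pairwise.getD_eraseIdx_mem_Icc {α : Type*} [Preorder α] {l : List α}
    (hl : l.Pairwise (· ≤ ·)) (i : ℕ) {j : ℕ} (hj : j + 1 < l.length) (d : α) :
    (l.eraseIdx i).getD j d ∈ Set.Icc (l.getD j d) (l.getD (j + 1) d) := by
  have hle : l[j] ≤ l[j + 1] := List.pairwise_iff_getElem.mp hl j (j + 1) _ _ (by omega)
  have hj' : j < (l.eraseIdx i).length := by rw [List.length_eraseIdx]; split <;> omega
  rw [List.getD_eq_getElem _ _ hj', List.getD_eq_getElem _ _ (by omega),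
    List.getD_eq_getElem _ _ hj, List.getElem_eraseIdx]
  split
  · exact ⟨le_rfl, hle⟩
  · exact ⟨hle, le_rfl⟩

theorem Multiset.sort_erase {α : Type*} [LinearOrder α] (s : Multiset α) (a : α) :
    (s.erase a).sort (· ≤ ·) = (s.sort (· ≤ ·)).erase a := by
  refine List.Perm.eq_of_pairwise' (Multiset.pairwise_sort _ _)
    ((Multiset.pairwise_sort _ _).sublist List.erase_sublist) ?_
  rw [← Multiset.coe_eq_coe, ← Multiset.coe_erase, Multiset.sort_eq, Multiset.sort_eq]

theorem kthHighest_erase_mem_Icc {s : Multiset ℝ} {a : ℝ} (ha : a ∈ s) {k : ℕ} (hk : 0 < k)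
    (hks : k < Multiset.card s) :
    kthHighest (s.erase a) k ∈ Set.Icc (kthHighest s (k + 1)) (kthHighest s k) := by
  have hmem := (Multiset.pairwise_sort s (· ≤ ·)).getD_eraseIdx_mem_Icc
    ((s.sort (· ≤ ·)).idxOf a) (j := Multiset.card s - (k + 1))
    (by rw [Multiset.length_sort]; omega) 0
  rw [List.eraseIdx_idxOf_eq_erase, ← Multiset.sort_erase,
    show Multiset.card s - (k + 1) + 1 = Multiset.card s - k by omega] at hmem
  simp only [kthHighest]
  rwa [Multiset.card_erase_of_mem ha, Nat.pred_eq_sub_one, Nat.sub_sub, Nat.add_comm 1 k]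

theorem otherBids_eq_erase {n : ℕ} (θ : Fin n → ℝ) (i : Fin n) :
    otherBids θ i = (allBids θ).erase (θ i) := by
  rw [otherBids, allBids, Finset.erase_val, Multiset.map_erase_of_mem _ _ (Finset.mem_univ_val i)]

theorem card_allBids {n : ℕ} (θ : Fin n → ℝ) : Multiset.card (allBids θ) = n := by
  simp [allBids]

theorem mem_allBids {n : ℕ} (θ : Fin n → ℝ) (i : Fin n) : θ i ∈ allBids θ :=
  Multiset.mem_map_of_mem θ (Finset.mem_univ_val i)

theorem bailey_cavallo_feasible_general
    {n m : ℕ} (hmn : m < n - 1) (L U : ℝ) :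
    ∀ θ : Fin n → ℝ, (∀ i, θ i ∈ Set.Icc L U) →
      (-(m : ℝ) * kthHighest (allBids θ) (m + 1) +
          (m / n) * ∑ i, kthHighest (otherBids θ i) (m + 1) ≤ 0) ∧
      (kthHighest (allBids θ) (m + 1) = kthHighest (allBids θ) (m + 2) →
        -(m : ℝ) * kthHighest (allBids θ) (m + 1) +
          (m / n) * ∑ i, kthHighest (otherBids θ i) (m + 1) = 0) := by
  intro θ _
  set A := kthHighest (allBids θ) (m + 1)
  have hbounds (i : Fin n) :
      kthHighest (otherBids θ i) (m + 1) ∈ Set.Icc (kthHighest (allBids θ) (m + 2)) A := by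
    rw [otherBids_eq_erase]
    exact kthHighest_erase_mem_Icc (mem_allBids θ i) m.succ_pos (by rw [card_allBids]; omega)
  have hn : (n : ℝ) ≠ 0 := by norm_cast; omega
  have hbalance : -(m : ℝ) * A + m / n * (n * A) = 0 := by field_simp; ring
  constructor
  · have hsum : ∑ i, kthHighest (otherBids θ i) (m + 1) ≤ n * A := by
      simpa using Finset.sum_le_card_nsmul Finset.univ _ A fun i _ => (hbounds i).2
    calc -(m : ℝ) * A + m / n * ∑ i, kthHighest (otherBids θ i) (m + 1)
        ≤ -(m : ℝ) * A + m / n * (n * A) := by gcongr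
      _ = 0 := hbalance
  · intro hAB
    have hsum : ∑ i, kthHighest (otherBids θ i) (m + 1) = n * A := by
      simp [Finset.sum_congr rfl fun i _ => le_antisymm (hbounds i).2 (hAB ▸ (hbounds i).1)]
    rw [hsum, hbalance]

/-- in a multi-unit auction with `m` units and `n` unit-demand
bidders with bids in `[L,U]` (`0 < m`, `m < n − 1`), the Bailey-Cavallo
mechanism `t i θ = t_i^{VCG}(θ) + (m/n)·[θ_{-i}]_{m+1}` — whose total payment
is `−m·[θ]_{m+1} + (m/n)·∑_i [θ_{-i}]_{m+1}` — is feasible: the total payment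
is `≤ 0` for all `θ`, with equality whenever `[θ]_{m+1} = [θ]_{m+2}`. -/
theorem bailey_cavallo_feasible
    {n m : ℕ} (hm0 : 0 < m) (hmn : m < n - 1) (L U : ℝ) (hLU : L ≤ U) :
    ∀ θ : Fin n → ℝ, (∀ i, θ i ∈ Set.Icc L U) →
      (-(m : ℝ) * kthHighest (allBids θ) (m + 1) +
          (m / n) * ∑ i, kthHighest (otherBids θ i) (m + 1) ≤ 0) ∧
      (kthHighest (allBids θ) (m + 1) = kthHighest (allBids θ) (m + 2) →
        -(m : ℝ) * kthHighest (allBids θ) (m + 1) +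
          (m / n) * ∑ i, kthHighest (otherBids θ i) (m + 1) = 0) :=
  bailey_cavallo_feasible_general hmn L U
end

section
/- In the public project problem with equal participation costs, the Bailey-Cavallo mechanism coincides with the VCG mechanism: for every player i and every profile θ_{-i} of others' types, S_i^{BCGC}(θ_{-i}) := max_{θ'_i ∈ [0,c]} Σ_k t_k^{VCG}(θ'_i, θ_{-i}) = 0. -/
/-- Efficient decision in the public project problem with equal cost shares:
build (`1`) iff the sum of types covers the cost `c`. -/
noncomputable def ppDecision {n : ℕ} (c : ℝ) (θ : Fin n → ℝ) : ℝ :=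
  if c ≤ ∑ i, θ i then 1 else 0

/-- VCG (Clarke) tax of player `i` in the public project problem with equal
cost shares `c/n`: `∑_{j≠i} v_j(f(θ),θ_j) − max_{d∈{0,1}} ∑_{j≠i} v_j(d,θ_j)`
where `v_j(d,θ_j) = d(θ_j − c/n)`. -/
noncomputable def ppVCGtax {n : ℕ} (c : ℝ) (θ : Fin n → ℝ) (i : Fin n) : ℝ :=
  ppDecision c θ * (∑ j ∈ Finset.univ.erase i, (θ j - c / n)) -
    max 0 (∑ j ∈ Finset.univ.erase i, (θ j - c / n))

/-! No VCG tax is positive, and the tax of `k` vanishes whenever removing `k` leaves the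
efficient decision unchanged. If the total report plus `c/n` stays below `c`, removing any
nonnegative report leaves the others' surplus `∑_{j≠k} (θ_j - c/n)` nonpositive, so the project
is built neither with nor without `k`; if it is at least `2c`, removing any report `≤ c` leaves
that surplus nonnegative, so it is built either way. Whatever `θ_{-i}` is, reporting `0` or `c`
puts player `i` in one of these two regimes. -/

open Finset

theorem Finset.sum_update_eq_add_sum_erase {ι : Type*} [DecidableEq ι] [Fintype ι]
    (f : ι → ℝ) (i : ι) (v : ℝ) :
    ∑ j, Function.update f i v j = v + ∑ j ∈ univ.erase i, f j := by
  rw [sum_update_of_mem (mem_univ i), sdiff_singleton_eq_erase]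

namespace PublicProject

variable {n : ℕ} (c : ℝ) (θ : Fin n → ℝ)

theorem ppVCGtax_nonpos (k : Fin n) : ppVCGtax c θ k ≤ 0 := by
  unfold ppVCGtax ppDecision
  split_ifs <;> simp

theorem sum_erase_sub_div (k : Fin n) :
    ∑ j ∈ univ.erase k, (θ j - c / n) = ∑ j, θ j - θ k - c + c / n := by
  have hn : (n : ℝ) ≠ 0 := Nat.cast_ne_zero.mpr (Fin.pos k).ne'
  rw [sum_erase_eq_sub (mem_univ k), sum_sub_distrib, sum_const, card_univ, Fintype.card_fin,
    nsmul_eq_mul, mul_div_cancel₀ c hn]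
  ring

theorem ppVCGtax_eq_zero_of_sum_lt {k : Fin n} (hθ : ∑ j, θ j < c)
    (hk : ∑ j, θ j - θ k - c + c / n ≤ 0) : ppVCGtax c θ k = 0 := by
  rw [ppVCGtax, ppDecision, if_neg hθ.not_ge, sum_erase_sub_div, max_eq_left hk]
  ring

theorem ppVCGtax_eq_zero_of_le_sum {k : Fin n} (hθ : c ≤ ∑ j, θ j)
    (hk : 0 ≤ ∑ j, θ j - θ k - c + c / n) : ppVCGtax c θ k = 0 := by
  rw [ppVCGtax, ppDecision, if_pos hθ, sum_erase_sub_div, max_eq_right hk]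
  ring

variable {c θ}

theorem sum_ppVCGtax_eq_zero_of_sum_lt (hc : 0 ≤ c) (hθ : ∀ k, 0 ≤ θ k)
    (h : ∑ j, θ j + c / n < c) : ∑ k, ppVCGtax c θ k = 0 := by
  have hcn : 0 ≤ c / n := by positivity
  exact sum_eq_zero fun k _ ↦
    ppVCGtax_eq_zero_of_sum_lt c θ (by linarith) (by linarith [hθ k])

theorem sum_ppVCGtax_eq_zero_of_le_sum (hc : 0 ≤ c) (hθ : ∀ k, θ k ≤ c)
    (h : 2 * c ≤ ∑ j, θ j + c / n) : ∑ k, ppVCGtax c θ k = 0 := by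
  refine sum_eq_zero fun k _ ↦ ppVCGtax_eq_zero_of_le_sum c θ ?_ (by linarith [hθ k])
  have hcn : c / n ≤ c := div_le_self hc (Nat.one_le_cast.mpr (Fin.pos k))
  linarith

end PublicProject

open PublicProject in
theorem public_project_bcgc_eq_vcg_general
    {n : ℕ} (c : ℝ) (hc : 0 < c)
    (θ : Fin n → ℝ) (hθ : ∀ i, θ i ∈ Set.Icc 0 c) (i : Fin n) :
    IsGreatest
      {x : ℝ | ∃ θi' ∈ Set.Icc 0 c,
        x = ∑ k, ppVCGtax c (Function.update θ i θi') k} 0 := by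
  refine ⟨?_, fun x ⟨v, _, hx⟩ ↦ hx ▸ sum_nonpos fun k _ ↦ ppVCGtax_nonpos c _ k⟩
  have update_mem {v : ℝ} (hv : v ∈ Set.Icc 0 c) (k : Fin n) :
      Function.update θ i v k ∈ Set.Icc 0 c := by
    rcases eq_or_ne k i with rfl | hk
    · simpa using hv
    · simpa [hk] using hθ k
  by_cases h : ∑ j ∈ univ.erase i, θ j + c / n < c
  · have h0 : (0 : ℝ) ∈ Set.Icc 0 c := ⟨le_rfl, hc.le⟩
    refine ⟨0, h0,
      (sum_ppVCGtax_eq_zero_of_sum_lt hc.le (fun k ↦ (update_mem h0 k).1) ?_).symm⟩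
    rwa [sum_update_eq_add_sum_erase, zero_add]
  · have hcc : c ∈ Set.Icc 0 c := ⟨hc.le, le_rfl⟩
    refine ⟨c, hcc,
      (sum_ppVCGtax_eq_zero_of_le_sum hc.le (fun k ↦ (update_mem hcc k).2) ?_).symm⟩
    rw [sum_update_eq_add_sum_erase]
    linarith

/-- in the public project problem with equal participation
costs, the Bailey-Cavallo mechanism coincides with VCG: for every player `i`
and profile `θ` of types in `[0,c]`,
`S_i^{BCGC}(θ_{-i}) = max_{θ'_i ∈ [0,c]} ∑_k t_k^{VCG}(θ'_i, θ_{-i}) = 0`. -/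
theorem public_project_bcgc_eq_vcg
    {n : ℕ} (hn : 2 ≤ n) (c : ℝ) (hc : 0 < c)
    (θ : Fin n → ℝ) (hθ : ∀ i, θ i ∈ Set.Icc 0 c) (i : Fin n) :
    IsGreatest
      {x : ℝ | ∃ θi' ∈ Set.Icc 0 c,
        x = ∑ k, ppVCGtax c (Function.update θ i θi') k} 0 :=
  public_project_bcgc_eq_vcg_general c hc θ hθ i
end

section
/- In the public project problem with equal participation costs, no feasible anonymous Groves mechanism welfare dominates the VCG mechanism: if h' : [0,c]^{n−1} → ℝ is permutation independent, the resulting Groves mechanism is feasible, and its total payment is at least that of VCG for every type vector, then h' equals the VCG function h on all of [0,c]^{n−1}. -/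
/-!
Let `g = h' - h`. Feasibility and welfare dominance squeeze the total Groves tax between the
total VCG tax and `0`, so `∑ᵢ g(θ₋ᵢ) = 0` at every type profile where all VCG taxes vanish.
Such profiles are `(c, x)` with `∑ x ≥ c - c/n` and `(0, x)` with `∑ x ≤ c - c/n`; by anonymity
they give `g x + ∑ⱼ g (x[j ↦ a]) = 0` for `a = c` resp. `a = 0`, and induction on the number of
coordinates of `x` different from `a` yields `g x = 0`.
-/

open Finset Function

section Tuples

variable {α M : Type*} {k : ℕ}

theorem Fin.cons_comp_succ_succAbove_eq_update_comp (a : α) (x : Fin k → α) (j : Fin k) :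
    (Fin.cons a x : Fin (k + 1) → α) ∘ j.succ.succAbove = update x j a ∘ j.cycleRange.symm := by
  cases k with
  | zero => exact j.elim0
  | succ n =>
    funext m
    rw [Fin.cons_comp_succ_succAbove, comp_apply, ← Fin.insertNth_removeNth j a x,
      Fin.insertNth_apply_cycleRange_symm]

theorem Fin.sum_comp_succAbove_cons [AddCommMonoid M] {g : (Fin k → α) → M}
    (hg : ∀ x (π : Equiv.Perm (Fin k)), g (x ∘ π) = g x) (a : α) (x : Fin k → α) :
    ∑ i : Fin (k + 1), g (Fin.cons a x ∘ i.succAbove) = g x + ∑ j, g (update x j a) := by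
  simp only [Fin.sum_univ_succ, Fin.succAbove_zero, Fin.cons_comp_succ,
    Fin.cons_comp_succ_succAbove_eq_update_comp, hg]

theorem Fin.sum_erase_eq_sum_succAbove [AddCommGroup M] (f : Fin (k + 1) → M) (i : Fin (k + 1)) :
    ∑ j ∈ univ.erase i, f j = ∑ m, f (i.succAbove m) := by
  rw [sum_erase_eq_sub (mem_univ i), Fin.sum_univ_succAbove f i, add_sub_cancel_left]

theorem eq_zero_of_add_sum_update_eq_zero [DecidableEq α] [AddCommMonoid M] [IsAddTorsionFree M]
    {g : (Fin k → α) → M} {a : α} {P : (Fin k → α) → Prop}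
    (hP : ∀ x j, P x → P (update x j a)) (hg : ∀ x, P x → g x + ∑ j, g (update x j a) = 0)
    (x : Fin k → α) (hx : P x) : g x = 0 := by
  induction hN : #{j | x j ≠ a} using Nat.strong_induction_on generalizing x with
  | _ N ih =>
  have hupdate : ∀ j, g (update x j a) = if x j = a then g x else 0 := by
    intro j
    split_ifs with hj
    · rw [← hj, update_eq_self]
    · refine ih _ ?_ _ (hP x j hx) rfl
      rw [← hN]
      refine card_lt_card ((ssubset_iff_of_subset ?_).2 ⟨j, by simpa using hj, by simp⟩)
      intro i
      simp only [mem_filter, mem_univ, true_and]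
      exact fun hi => by rwa [update_of_ne (by rintro rfl; simp at hi)] at hi
  have hsum := hg x hx
  rw [sum_congr rfl fun j _ => hupdate j, sum_ite, sum_const_zero, add_zero, sum_const,
    ← succ_nsmul'] at hsum
  exact (nsmul_eq_zero_iff_right (Nat.succ_ne_zero _)).1 hsum

end Tuples

section VCG

variable {n : ℕ} {c : ℝ} {θ : Fin n → ℝ}

def ppVCGBalanced (c : ℝ) (θ : Fin n → ℝ) : Prop :=
  (∀ i, θ i ∈ Set.Icc 0 c) ∧ ∀ i, ppVCGtax c θ i = 0

variable [NeZero n]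

theorem sum_erase_sub_div_eq (c : ℝ) (θ : Fin n → ℝ) (i : Fin n) :
    ∑ j ∈ univ.erase i, (θ j - c / n) = ∑ j, θ j - θ i - c + c / n := by
  rw [sum_erase_eq_sub (mem_univ i), sum_sub_distrib, sum_const, card_univ, Fintype.card_fin,
    nsmul_eq_mul, mul_div_cancel₀ _ (Nat.cast_ne_zero.2 (NeZero.ne n))]
  ring

theorem ppVCGtax_eq_zero_of_sum_ge (hc : 0 ≤ c) (hθ : ∀ i, θ i ≤ c)
    (hsum : 2 * c - c / n ≤ ∑ i, θ i) (i : Fin n) : ppVCGtax c θ i = 0 := by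
  have hshare : c / n ≤ c := div_le_self hc (Nat.one_le_cast.2 NeZero.one_le)
  have hpivot : 0 ≤ ∑ j ∈ univ.erase i, (θ j - c / n) := by
    rw [sum_erase_sub_div_eq]
    linarith [hθ i]
  have hdecision : ppDecision c θ = 1 := if_pos (by linarith)
  rw [ppVCGtax, hdecision, one_mul, max_eq_right hpivot, sub_self]

theorem ppVCGtax_eq_zero_of_sum_le (hc : 0 < c) (hθ : ∀ i, 0 ≤ θ i)
    (hsum : ∑ i, θ i ≤ c - c / n) (i : Fin n) : ppVCGtax c θ i = 0 := by
  have hshare : 0 < c / n := div_pos hc (Nat.cast_pos.2 (NeZero.pos n))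
  have hpivot : ∑ j ∈ univ.erase i, (θ j - c / n) ≤ 0 := by
    rw [sum_erase_sub_div_eq]
    linarith [hθ i]
  have hdecision : ppDecision c θ = 0 := if_neg (by linarith)
  rw [ppVCGtax, hdecision, zero_mul, max_eq_left hpivot, sub_self]

end VCG

section Cons

variable {k : ℕ} {c : ℝ} {x : Fin k → ℝ}

theorem ppVCGBalanced_cons_self (hc : 0 ≤ c) (hx : ∀ j, x j ∈ Set.Icc 0 c)
    (hsum : c - c / (k + 1) ≤ ∑ j, x j) : ppVCGBalanced c (Fin.cons c x : Fin (k + 1) → ℝ) := by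
  have hθ : ∀ i, (Fin.cons c x : Fin (k + 1) → ℝ) i ∈ Set.Icc 0 c :=
    fun i => Fin.cases ⟨hc, le_rfl⟩ hx i
  refine ⟨hθ, ppVCGtax_eq_zero_of_sum_ge hc (fun i => (hθ i).2) ?_⟩
  rw [Fin.sum_cons, Nat.cast_succ]
  linarith

theorem ppVCGBalanced_cons_zero (hc : 0 < c) (hx : ∀ j, x j ∈ Set.Icc 0 c)
    (hsum : ∑ j, x j ≤ c - c / (k + 1)) : ppVCGBalanced c (Fin.cons 0 x : Fin (k + 1) → ℝ) := by
  have hθ : ∀ i, (Fin.cons 0 x : Fin (k + 1) → ℝ) i ∈ Set.Icc 0 c :=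
    fun i => Fin.cases ⟨le_rfl, hc.le⟩ hx i
  refine ⟨hθ, ppVCGtax_eq_zero_of_sum_le hc (fun i => (hθ i).1) ?_⟩
  rw [Fin.sum_cons, Nat.cast_succ]
  linarith

end Cons

section Residual

variable {M : Type*} [AddCommMonoid M] [IsAddTorsionFree M] {k : ℕ} {c : ℝ}
  {g : (Fin k → ℝ) → M}

theorem eq_zero_of_sum_ge_of_ppVCGBalanced (hc : 0 ≤ c)
    (hg : ∀ x (π : Equiv.Perm (Fin k)), g (x ∘ π) = g x)
    (hzero : ∀ θ : Fin (k + 1) → ℝ, ppVCGBalanced c θ →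
      ∑ i : Fin (k + 1), g (θ ∘ i.succAbove) = 0)
    {x : Fin k → ℝ} (hx : ∀ j, x j ∈ Set.Icc 0 c) (hsum : c - c / (k + 1) ≤ ∑ j, x j) :
    g x = 0 := by
  refine eq_zero_of_add_sum_update_eq_zero (a := c)
    (P := fun y => (∀ j, y j ∈ Set.Icc 0 c) ∧ c - c / (k + 1) ≤ ∑ j, y j) ?_ ?_ x ⟨hx, hsum⟩
  · rintro y j ⟨hy, hsum⟩
    exact ⟨(forall_update_iff y fun _ b => b ∈ Set.Icc 0 c).2 ⟨⟨hc, le_rfl⟩, fun i _ => hy i⟩,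
      hsum.trans (sum_le_sum fun i _ => le_update_self_iff.2 (hy j).2 i)⟩
  · rintro y ⟨hy, hsum⟩
    rw [← Fin.sum_comp_succAbove_cons hg]
    exact hzero _ (ppVCGBalanced_cons_self hc hy hsum)

theorem eq_zero_of_sum_le_of_ppVCGBalanced (hc : 0 < c)
    (hg : ∀ x (π : Equiv.Perm (Fin k)), g (x ∘ π) = g x)
    (hzero : ∀ θ : Fin (k + 1) → ℝ, ppVCGBalanced c θ →
      ∑ i : Fin (k + 1), g (θ ∘ i.succAbove) = 0)
    {x : Fin k → ℝ} (hx : ∀ j, x j ∈ Set.Icc 0 c) (hsum : ∑ j, x j ≤ c - c / (k + 1)) :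
    g x = 0 := by
  refine eq_zero_of_add_sum_update_eq_zero (a := 0)
    (P := fun y => (∀ j, y j ∈ Set.Icc 0 c) ∧ ∑ j, y j ≤ c - c / (k + 1)) ?_ ?_ x ⟨hx, hsum⟩
  · rintro y j ⟨hy, hsum⟩
    exact ⟨(forall_update_iff y fun _ b => b ∈ Set.Icc 0 c).2 ⟨⟨le_rfl, hc.le⟩, fun i _ => hy i⟩,
      (sum_le_sum fun i _ => update_le_self_iff.2 (hy j).1 i).trans hsum⟩
  · rintro y ⟨hy, hsum⟩
    rw [← Fin.sum_comp_succAbove_cons hg]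
    exact hzero _ (ppVCGBalanced_cons_zero hc hy hsum)

end Residual

section Groves

variable {k : ℕ} {c : ℝ}

noncomputable def ppClarkePivot (c : ℝ) (x : Fin k → ℝ) : ℝ :=
  -max 0 (∑ j, (x j - c / (k + 1)))

noncomputable def ppGrovesTax (c : ℝ) (h' : (Fin k → ℝ) → ℝ) (θ : Fin (k + 1) → ℝ)
    (i : Fin (k + 1)) : ℝ :=
  ppDecision c θ * (∑ j ∈ univ.erase i, (θ j - c / (k + 1))) + h' (θ ∘ i.succAbove)

theorem ppClarkePivot_comp_perm (x : Fin k → ℝ) (π : Equiv.Perm (Fin k)) :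
    ppClarkePivot c (x ∘ π) = ppClarkePivot c x := by
  simp only [ppClarkePivot, comp_apply, Equiv.sum_comp π fun j => x j - c / (k + 1)]

theorem ppGrovesTax_eq_of_ppVCGtax_eq_zero {h' : (Fin k → ℝ) → ℝ} {θ : Fin (k + 1) → ℝ}
    {i : Fin (k + 1)} (hvcg : ppVCGtax c θ i = 0) :
    ppGrovesTax c h' θ i = (h' - ppClarkePivot c : (Fin k → ℝ) → ℝ) (θ ∘ i.succAbove) := by
  rw [ppVCGtax, sub_eq_zero, Nat.cast_succ] at hvcg
  rw [ppGrovesTax, hvcg, Fin.sum_erase_eq_sum_succAbove (fun j => θ j - c / (k + 1)),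
    Pi.sub_apply, ppClarkePivot, sub_neg_eq_add, add_comm]
  rfl

end Groves

theorem public_project_no_anonymous_welfare_dominance_general
    {k : ℕ} (c : ℝ) (hc : 0 < c)
    (h' : (Fin k → ℝ) → ℝ)
    (hperm : ∀ (x : Fin k → ℝ) (π : Equiv.Perm (Fin k)), h' (x ∘ π) = h' x)
    (t' : (Fin (k + 1) → ℝ) → Fin (k + 1) → ℝ)
    (ht' : ∀ θ i, t' θ i =
      ppDecision c θ * (∑ j ∈ Finset.univ.erase i, (θ j - c / (k + 1))) +
        h' (θ ∘ i.succAbove))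
    (hfeas : ∀ θ : Fin (k + 1) → ℝ, (∀ i, θ i ∈ Set.Icc 0 c) →
      ∑ i, t' θ i ≤ 0)
    (hwelfare : ∀ θ : Fin (k + 1) → ℝ, (∀ i, θ i ∈ Set.Icc 0 c) →
      ∑ i, ppVCGtax c θ i ≤ ∑ i, t' θ i) :
    ∀ x : Fin k → ℝ, (∀ j, x j ∈ Set.Icc 0 c) →
      h' x = -max 0 (∑ j, (x j - c / (k + 1))) := by
  obtain rfl : t' = ppGrovesTax c h' := funext₂ ht'
  set g : (Fin k → ℝ) → ℝ := h' - ppClarkePivot c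
  have hg : ∀ x (π : Equiv.Perm (Fin k)), g (x ∘ π) = g x := fun x π => by
    simp only [g, Pi.sub_apply, hperm, ppClarkePivot_comp_perm]
  have hzero : ∀ θ : Fin (k + 1) → ℝ, ppVCGBalanced c θ →
      ∑ i : Fin (k + 1), g (θ ∘ i.succAbove) = 0 := by
    rintro θ ⟨hθ, hvcg⟩
    have hdominance := hwelfare θ hθ
    have hfeasible := hfeas θ hθ
    simp only [hvcg, sum_const_zero, ppGrovesTax_eq_of_ppVCGtax_eq_zero (hvcg _)]
      at hdominance hfeasible
    exact le_antisymm hfeasible hdominance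
  intro x hx
  rw [← sub_eq_zero]
  rcases le_total (∑ j, x j) (c - c / (k + 1)) with hlow | hhigh
  · exact eq_zero_of_sum_le_of_ppVCGBalanced hc hg hzero hx hlow
  · exact eq_zero_of_sum_ge_of_ppVCGBalanced hc.le hg hzero hx hhigh

/-- in the public project problem with `k + 1 ≥ 2` players and
equal participation costs, no feasible anonymous Groves mechanism welfare
dominates VCG: if `h' : [0,c]^k → ℝ` is permutation independent, the
resulting Groves mechanism (taxes `t' i θ = f(θ)·∑_{j≠i}(θ_j − c/n) + h'(θ_{-i})`)
is feasible, and its total payment is at least that of VCG at every type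
vector, then `h'` coincides with the VCG function
`h(x) = −max{0, ∑_j (x_j − c/n)}` on all of `[0,c]^k`. -/
theorem public_project_no_anonymous_welfare_dominance
    {k : ℕ} (hk : 1 ≤ k) (c : ℝ) (hc : 0 < c)
    (h' : (Fin k → ℝ) → ℝ)
    (hperm : ∀ (x : Fin k → ℝ) (π : Equiv.Perm (Fin k)), h' (x ∘ π) = h' x)
    (t' : (Fin (k + 1) → ℝ) → Fin (k + 1) → ℝ)
    (ht' : ∀ θ i, t' θ i =
      ppDecision c θ * (∑ j ∈ Finset.univ.erase i, (θ j - c / (k + 1))) +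
        h' (θ ∘ i.succAbove))
    (hfeas : ∀ θ : Fin (k + 1) → ℝ, (∀ i, θ i ∈ Set.Icc 0 c) →
      ∑ i, t' θ i ≤ 0)
    (hwelfare : ∀ θ : Fin (k + 1) → ℝ, (∀ i, θ i ∈ Set.Icc 0 c) →
      ∑ i, ppVCGtax c θ i ≤ ∑ i, t' θ i) :
    ∀ x : Fin k → ℝ, (∀ j, x j ∈ Set.Icc 0 c) →
      h' x = -max 0 (∑ j, (x j - c / (k + 1))) :=
  public_project_no_anonymous_welfare_dominance_general c hc h' hperm t' ht' hfeas hwelfare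
end

section
/- In the public project problem with equal participation costs, there exists no feasible Groves mechanism that welfare dominates the VCG mechanism; i.e., the VCG mechanism is welfare undominated. -/
open Finset

section AlternatingSum

variable {R : Type*} [CommRing R]

theorem Finset.sum_powerset_neg_one_pow_card_mul_eq_zero {α : Type*} [DecidableEq α]
    {s : Finset α} {i : α} (hi : i ∈ s) {g : Finset α → R} (hg : ∀ T, g (insert i T) = g T) :
    ∑ T ∈ s.powerset, (-1) ^ #T * g T = 0 := by
  rw [← insert_erase hi, sum_powerset_insert (notMem_erase i s), ← sum_add_distrib]
  refine sum_eq_zero fun T hT => ?_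
  have hiT : i ∉ T := fun h => notMem_erase i s (mem_powerset.1 hT h)
  rw [hg, card_insert_of_notMem hiT, pow_succ]
  ring

theorem Fin.sum_neg_one_pow_card_mul_sum_succAbove_piecewise {n : ℕ} {β : Type*}
    (g : Fin (n + 1) → (Fin n → β) → R) (θ b : Fin (n + 1) → β) :
    ∑ T : Finset (Fin (n + 1)), (-1) ^ #T * ∑ i, g i (T.piecewise θ b ∘ i.succAbove) = 0 := by
  simp_rw [mul_sum]
  rw [sum_comm]
  refine sum_eq_zero fun i _ => ?_
  rw [← powerset_univ]
  refine sum_powerset_neg_one_pow_card_mul_eq_zero (mem_univ i) fun T => ?_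
  congr 1
  funext x
  exact piecewise_insert_of_ne _ _ _ (Fin.succAbove_ne i x)

end AlternatingSum

theorem Finset.eq_zero_of_sum_neg_one_pow_card_mul_eq_zero {ι : Type*} [Fintype ι]
    {f : Finset ι → ℝ} (hsum : ∑ T, (-1) ^ #T * f T = 0) (hf : ∀ T, 0 ≤ f T)
    (hsign : ∀ T, f T = 0 ∨ (-1 : ℝ) ^ #T = (-1) ^ Fintype.card ι) : f univ = 0 := by
  set σ : ℝ := (-1) ^ Fintype.card ι
  have hσ : σ * σ = 1 := by rw [← pow_add, ← two_mul, pow_mul]; norm_num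
  have hterm : ∀ T, σ * ((-1) ^ #T * f T) = f T := fun T => by
    rcases hsign T with h | h
    · simp [h]
    · rw [h, ← mul_assoc, hσ, one_mul]
  have htotal : ∑ T, f T = 0 :=
    calc ∑ T, f T = ∑ T, σ * ((-1) ^ #T * f T) := sum_congr rfl fun T _ => (hterm T).symm
      _ = 0 := by rw [← mul_sum, hsum, mul_zero]
  exact (sum_eq_zero_iff_of_nonneg fun T _ => hf T).1 htotal univ (mem_univ _)

section Threshold

variable {ι : Type*} [Fintype ι] [DecidableEq ι] {A : ℝ} {w : ι → ℝ}

theorem add_le_sum_of_le_of_ne (hw : ∀ i, 0 ≤ w i) {p q : ι} (hqp : q ≠ p) (hq : A ≤ w q) :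
    A + w p ≤ ∑ i, w i := by
  rw [← add_sum_erase univ w (mem_univ p), add_comm]
  gcongr
  exact hq.trans (single_le_sum (fun i _ => hw i) (mem_erase.2 ⟨hqp, mem_univ q⟩))

theorem forall_add_le_sum_of_le (hw : ∀ i, 0 ≤ w i) {q : ι} (hq : A ≤ w q)
    (hsum : A + w q ≤ ∑ i, w i) (p : ι) : A + w p ≤ ∑ i, w i :=
  if hqp : q = p then hqp ▸ hsum else add_le_sum_of_le_of_ne hw hqp hq

theorem forall_add_le_sum_of_le_of_le (hw : ∀ i, 0 ≤ w i) {q r : ι} (hqr : q ≠ r)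
    (hq : A ≤ w q) (hr : A ≤ w r) (p : ι) : A + w p ≤ ∑ i, w i :=
  forall_add_le_sum_of_le hw hq (add_le_sum_of_le_of_ne hw hqr.symm hr) p

end Threshold

/-- The properties of `θ ↦ ∑ i, t θ i - ∑ i, ppVCGtax c θ i` for a feasible Groves mechanism `t`
dominating VCG on the box `[0, c] ^ ι`, where `A` is the total cost share of all players but one.
The last two fields are the regions where no player is pivotal, so that VCG collects nothing. -/
structure IsWelfareGap {ι : Type*} [Fintype ι] [DecidableEq ι] (A c : ℝ) (D : (ι → ℝ) → ℝ) :
    Prop where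
  sum_neg_one_pow_card_mul_eq_zero :
    ∀ θ b : ι → ℝ, ∑ T : Finset ι, (-1) ^ #T * D (T.piecewise θ b) = 0
  nonneg : ∀ w : ι → ℝ, (∀ i, w i ∈ Set.Icc 0 c) → 0 ≤ D w
  eq_zero_of_sum_le : ∀ w : ι → ℝ, (∀ i, w i ∈ Set.Icc 0 c) → ∑ i, w i ≤ A → D w = 0
  eq_zero_of_forall_add_le_sum : ∀ w : ι → ℝ, (∀ i, w i ∈ Set.Icc 0 c) →
    (∀ p, A + w p ≤ ∑ i, w i) → D w = 0

namespace IsWelfareGap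

variable {ι : Type*} [Fintype ι] [DecidableEq ι] {A c : ℝ} {D : (ι → ℝ) → ℝ}

theorem eq_zero_of_apply_eq_of_sum_erase_le (hD : IsWelfareGap A c D) (hAc : A ≤ c)
    {ψ : ι → ℝ} (hψ : ∀ i, ψ i ∈ Set.Icc 0 c) {j : ι} (hj : ψ j = c)
    (hsum : ∑ i ∈ univ.erase j, ψ i ≤ A) : D ψ = 0 := by
  -- `β` gives the corner `(univ.erase j).piecewise ψ b` the total `A` exactly
  set β := A - ∑ i ∈ univ.erase j, ψ i
  set b : ι → ℝ := Function.update (fun _ => c) j β with hb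
  have hβ : β ∈ Set.Icc 0 c :=
    ⟨by linarith, by linarith [sum_nonneg fun i (_ : i ∈ univ.erase j) => (hψ i).1]⟩
  have hbox : ∀ (T : Finset ι) i, T.piecewise ψ b i ∈ Set.Icc 0 c := fun T i =>
    T.piecewise_cases ψ b (· ∈ Set.Icc 0 c) (hψ i) <| by
      rcases eq_or_ne i j with rfl | hij
      · simpa [hb] using hβ
      · simpa [hb, hij] using (⟨(hψ j).1.trans (hψ j).2, le_rfl⟩ : c ∈ Set.Icc 0 c)
  have hpos : ∀ (T : Finset ι) i, 0 ≤ T.piecewise ψ b i := fun T i => (hbox T i).1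
  have hout : ∀ (T : Finset ι) i, i ∉ T → i ≠ j → A ≤ T.piecewise ψ b i := fun T i hiT hij => by
    simpa [hiT, hb, hij] using hAc
  rw [← piecewise_univ ψ b]
  refine eq_zero_of_sum_neg_one_pow_card_mul_eq_zero (f := fun T => D (T.piecewise ψ b))
    (hD.sum_neg_one_pow_card_mul_eq_zero ψ b) (fun T => hD.nonneg _ (hbox T)) fun T => ?_
  by_cases hjT : j ∈ T
  · by_cases hTu : T = univ
    · exact .inr (by rw [hTu, card_univ])
    obtain ⟨m, hmT⟩ : ∃ m, m ∉ T := by simpa [eq_univ_iff_forall] using hTu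
    have hmj : m ≠ j := fun h => hmT (h ▸ hjT)
    refine .inl (hD.eq_zero_of_forall_add_le_sum _ (hbox T)
      (forall_add_le_sum_of_le_of_le (hpos T) hmj (hout T m hmT hmj) ?_))
    simpa [hjT, hj] using hAc
  have hTj : T ⊆ univ.erase j := fun i hi => mem_erase.2 ⟨ne_of_mem_of_not_mem hi hjT, mem_univ i⟩
  have hcard : #(univ.erase j \ T) + #T + 1 = Fintype.card ι := by
    rw [card_sdiff_add_card_eq_card hTj, card_erase_add_one (mem_univ j), card_univ]
  obtain hU | hU | hU :
      #(univ.erase j \ T) = 0 ∨ #(univ.erase j \ T) = 1 ∨ 1 < #(univ.erase j \ T) := by omega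
  · have hT : T = univ.erase j := eq_of_subset_of_card_le hTj (by simp at hcard ⊢; omega)
    refine .inl (hD.eq_zero_of_sum_le _ (hbox T) (le_of_eq ?_))
    rw [← add_sum_erase _ _ (mem_univ j), piecewise_eq_of_notMem _ _ _ hjT,
      sum_congr rfl fun i (hi : i ∈ univ.erase j) => piecewise_eq_of_mem T ψ b (hT ▸ hi)]
    simp [hb, β]
  · exact .inr (by rw [← hcard, hU]; ring)
  · obtain ⟨m, hm, m', hm', hmm'⟩ := one_lt_card.1 hU
    simp only [mem_sdiff, mem_erase] at hm hm'
    exact .inl (hD.eq_zero_of_forall_add_le_sum _ (hbox T) (forall_add_le_sum_of_le_of_le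
      (hpos T) hmm' (hout T m hm.2 hm.1.1) (hout T m' hm'.2 hm'.1.1)))

theorem eq_zero (hD : IsWelfareGap A c D) (hAc : A ≤ c) {w : ι → ℝ}
    (hw : ∀ i, w i ∈ Set.Icc 0 c) : D w = 0 := by
  set b : ι → ℝ := fun m => if A ≤ ∑ i ∈ univ.erase m, w i then c else 0 with hb
  have hbox : ∀ (T : Finset ι) i, T.piecewise w b i ∈ Set.Icc 0 c := fun T i =>
    T.piecewise_cases w b (· ∈ Set.Icc 0 c) (hw i) <| by
      have hc : 0 ≤ c := (hw i).1.trans (hw i).2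
      simp only [hb]
      split_ifs
      exacts [⟨hc, le_rfl⟩, ⟨le_rfl, hc⟩]
  rw [← piecewise_univ w b]
  refine eq_zero_of_sum_neg_one_pow_card_mul_eq_zero (f := fun T => D (T.piecewise w b))
    (hD.sum_neg_one_pow_card_mul_eq_zero w b) (fun T => hD.nonneg _ (hbox T)) fun T => ?_
  by_cases hTu : T = univ
  · exact .inr (by rw [hTu, card_univ])
  refine .inl ?_
  obtain ⟨l, hlT⟩ : ∃ l, l ∉ T := by simpa [eq_univ_iff_forall] using hTu
  set v := T.piecewise w b
  have hpos : ∀ i, 0 ≤ v i := fun i => (hbox T i).1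
  by_cases hpivot : ∃ m ∉ T, A ≤ ∑ i ∈ univ.erase m, w i
  · obtain ⟨m, hmT, hm⟩ := hpivot
    have hvm : v m = c := by simp only [v, piecewise_eq_of_notMem _ _ _ hmT, hb, if_pos hm]
    by_cases hsum : ∑ i ∈ univ.erase m, v i ≤ A
    · exact hD.eq_zero_of_apply_eq_of_sum_erase_le hAc (hbox T) hvm hsum
    refine hD.eq_zero_of_forall_add_le_sum _ (hbox T) (forall_add_le_sum_of_le hpos (hvm ▸ hAc) ?_)
    rw [← add_sum_erase _ _ (mem_univ m)]
    linarith
  push Not at hpivot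
  have hvout : ∀ i ∉ T, v i = 0 := fun i hiT => by
    simp only [v, piecewise_eq_of_notMem _ _ _ hiT, hb, if_neg (not_le.2 (hpivot i hiT))]
  have hvw : ∀ i, v i ≤ w i := fun i => by
    by_cases hiT : i ∈ T
    · simp [v, hiT]
    · simpa [hvout i hiT] using (hw i).1
  refine hD.eq_zero_of_sum_le _ (hbox T) ?_
  calc ∑ i, v i = ∑ i ∈ univ.erase l, v i := (sum_erase _ (hvout l hlT)).symm
    _ ≤ ∑ i ∈ univ.erase l, w i := sum_le_sum fun i _ => hvw i
    _ ≤ A := (hpivot l hlT).le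

end IsWelfareGap

theorem Fin.sum_univ_erase_eq_sum_succAbove {M : Type*} [AddCommMonoid M] {n : ℕ}
    (f : Fin (n + 1) → M) (i : Fin (n + 1)) : ∑ j ∈ univ.erase i, f j = ∑ x, f (i.succAbove x) := by
  rw [Fin.univ_succAbove n i, erase_cons, sum_map]
  rfl

section PublicProject

variable {k : ℕ} {c : ℝ}

theorem natCast_mul_div_add_one_lt (hc : 0 < c) : (k : ℝ) * (c / (k + 1)) < c := by
  rw [mul_div_assoc', div_lt_iff₀ (by positivity)]
  linarith

theorem sum_univ_erase_sub_div (θ : Fin (k + 1) → ℝ) (i : Fin (k + 1)) :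
    ∑ j ∈ univ.erase i, (θ j - c / (k + 1)) = ∑ j, θ j - θ i - k * (c / (k + 1)) := by
  rw [sum_sub_distrib, sum_erase_eq_sub (mem_univ i), sum_const, card_erase_of_mem (mem_univ i),
    card_univ, Fintype.card_fin, nsmul_eq_mul]
  push_cast
  ring

theorem ppVCGtax_eq (θ : Fin (k + 1) → ℝ) (i : Fin (k + 1)) :
    ppVCGtax c θ i = ppDecision c θ * (∑ j, θ j - θ i - k * (c / (k + 1))) -
      max 0 (∑ j, θ j - θ i - k * (c / (k + 1))) := by
  rw [ppVCGtax, Nat.cast_add_one, sum_univ_erase_sub_div]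

theorem sum_ppVCGtax_eq_zero_of_sum_le (hc : 0 < c) {θ : Fin (k + 1) → ℝ} (hθ : ∀ i, 0 ≤ θ i)
    (hsum : ∑ i, θ i ≤ k * (c / (k + 1))) : ∑ i, ppVCGtax c θ i = 0 := by
  have hdecision : ppDecision c θ = 0 :=
    if_neg (not_le.2 (hsum.trans_lt (natCast_mul_div_add_one_lt hc)))
  refine sum_eq_zero fun i _ => ?_
  rw [ppVCGtax_eq, hdecision, max_eq_left (by linarith [hθ i])]
  ring

theorem sum_ppVCGtax_eq_zero_of_forall_add_le_sum (hk : 0 < k) {θ : Fin (k + 1) → ℝ}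
    (hθ : ∀ p, k * (c / (k + 1)) + θ p ≤ ∑ i, θ i) : ∑ i, ppVCGtax c θ i = 0 := by
  have hdecision : ppDecision c θ = 1 := by
    refine if_pos ?_
    have hsum := sum_le_sum fun p (_ : p ∈ univ) => hθ p
    simp only [sum_add_distrib, sum_const, card_univ, Fintype.card_fin, nsmul_eq_mul] at hsum
    have hk' : (0 : ℝ) < k := by exact_mod_cast hk
    have hkc : ((k + 1 : ℕ) : ℝ) * (k * (c / (k + 1))) = k * c := by
      push_cast; field_simp
    rw [hkc] at hsum
    push_cast at hsum
    exact le_of_mul_le_mul_left (by linarith) hk'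
  refine sum_eq_zero fun i _ => ?_
  rw [ppVCGtax_eq, hdecision, max_eq_right (by linarith [hθ i])]
  ring

end PublicProject

theorem isWelfareGap_of_feasible_of_dominates {k : ℕ} (hk : 0 < k) {c : ℝ} (hc : 0 < c)
    {h : Fin (k + 1) → (Fin k → ℝ) → ℝ} {t : (Fin (k + 1) → ℝ) → Fin (k + 1) → ℝ}
    (ht : ∀ θ i, t θ i =
      ppDecision c θ * (∑ j ∈ univ.erase i, (θ j - c / (k + 1))) + h i (θ ∘ i.succAbove))
    (hfeas : ∀ θ : Fin (k + 1) → ℝ, (∀ i, θ i ∈ Set.Icc 0 c) → ∑ i, t θ i ≤ 0)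
    (hdom : ∀ θ : Fin (k + 1) → ℝ, (∀ i, θ i ∈ Set.Icc 0 c) →
      ∑ i, ppVCGtax c θ i ≤ ∑ i, t θ i) :
    IsWelfareGap (k * (c / (k + 1))) c fun θ => ∑ i, t θ i - ∑ i, ppVCGtax c θ i := by
  have hform : ∀ θ : Fin (k + 1) → ℝ, ∑ i, t θ i - ∑ i, ppVCGtax c θ i =
      ∑ i, (h i (θ ∘ i.succAbove) + max 0 (∑ x, (θ (i.succAbove x) - c / (k + 1)))) := by
    intro θ
    rw [← sum_sub_distrib]
    refine sum_congr rfl fun i _ => ?_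
    rw [ht, ppVCGtax, Nat.cast_add_one, Fin.sum_univ_erase_eq_sum_succAbove]
    ring
  have hzero : ∀ θ : Fin (k + 1) → ℝ, (∀ i, θ i ∈ Set.Icc 0 c) → ∑ i, ppVCGtax c θ i = 0 →
      ∑ i, t θ i - ∑ i, ppVCGtax c θ i = 0 := fun θ hθ h0 => by
    linarith [hfeas θ hθ, hdom θ hθ]
  refine ⟨fun θ b => ?_, fun θ hθ => sub_nonneg.2 (hdom θ hθ), fun θ hθ hsum => ?_,
    fun θ hθ hsum => hzero θ hθ (sum_ppVCGtax_eq_zero_of_forall_add_le_sum hk hsum)⟩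
  · simp only [hform]
    exact Fin.sum_neg_one_pow_card_mul_sum_succAbove_piecewise
      (fun i y => h i y + max 0 (∑ x, (y x - c / (k + 1)))) θ b
  · exact hzero θ hθ (sum_ppVCGtax_eq_zero_of_sum_le hc (fun i => (hθ i).1) hsum)

/-- in the public project problem with `k + 1 ≥ 2` players and
equal participation costs, there exists no feasible Groves mechanism
(given by functions `h i` of `θ_{-i}`, with taxes
`t i θ = f(θ)·∑_{j≠i}(θ_j − c/n) + h i (θ_{-i})`) that welfare dominates the
VCG mechanism: the VCG mechanism is welfare undominated. -/
theorem public_project_vcg_welfare_undominated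
    {k : ℕ} (hk : 1 ≤ k) (c : ℝ) (hc : 0 < c) :
    ¬ ∃ (h : Fin (k + 1) → (Fin k → ℝ) → ℝ)
        (t : (Fin (k + 1) → ℝ) → Fin (k + 1) → ℝ),
      (∀ θ i, t θ i =
        ppDecision c θ * (∑ j ∈ Finset.univ.erase i, (θ j - c / (k + 1))) +
          h i (θ ∘ i.succAbove)) ∧
      (∀ θ : Fin (k + 1) → ℝ, (∀ i, θ i ∈ Set.Icc 0 c) → ∑ i, t θ i ≤ 0) ∧
      (∀ θ : Fin (k + 1) → ℝ, (∀ i, θ i ∈ Set.Icc 0 c) →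
        ∑ i, ppVCGtax c θ i ≤ ∑ i, t θ i) ∧
      (∃ θ : Fin (k + 1) → ℝ, (∀ i, θ i ∈ Set.Icc 0 c) ∧
        ∑ i, ppVCGtax c θ i < ∑ i, t θ i) := by
  rintro ⟨h, t, ht, hfeas, hdom, θ, hθ, hstrict⟩
  have hgap : ∑ i, t θ i - ∑ i, ppVCGtax c θ i = 0 :=
    (isWelfareGap_of_feasible_of_dominates hk hc ht hfeas hdom).eq_zero
      (natCast_mul_div_add_one_lt hc).le hθ
  linarith
end

section
/- In the general public project problem (with possibly unequal cost shares c_1, ..., c_n summing to c), there is no pay-only Groves mechanism that dominates the VCG mechanism: if h' is a Groves mechanism with t'_i(θ) ≤ 0 for all i and θ, and t'_i(θ) ≥ t_i^{VCG}(θ) for all i and θ, then t' = t^{VCG}. -/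
/-- Efficient decision in the general public project problem with cost `c`. -/
noncomputable def gppDecision {n : ℕ} (c : ℝ) (θ : Fin n → ℝ) : ℝ :=
  if c ≤ ∑ i, θ i then 1 else 0

/-- VCG (Clarke) tax of player `i` in the general public project problem with
cost shares `cs`: `v_j(d,θ_j) = d(θ_j − cs_j)`. -/
noncomputable def gppVCGtax {n : ℕ} (c : ℝ) (cs : Fin n → ℝ)
    (θ : Fin n → ℝ) (i : Fin n) : ℝ :=
  gppDecision c θ * (∑ j ∈ Finset.univ.erase i, (θ j - cs j)) -
    max 0 (∑ j ∈ Finset.univ.erase i, (θ j - cs j))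


open Finset Function

/-!
The difference between a Groves tax and the VCG tax of player `i` depends on `θ_{-i}` only.
When player `i` reports exactly its own cost share, the project is built iff the others' net
valuation `S = ∑_{j≠i} (θ_j - c_j)` is nonnegative, so the VCG tax `f(θ)·S - max 0 S`
vanishes there. Pay-only and dominance squeeze the dominating tax to `0` at that profile, which pins
`h_i(θ_{-i}) = -max 0 S` and hence the whole tax to the VCG one.
-/

section
variable {n : ℕ} (c : ℝ) (cs θ : Fin n → ℝ) (i : Fin n)

lemma sum_erase_update_sub (x : ℝ) :
    ∑ j ∈ univ.erase i, (update θ i x j - cs j) = ∑ j ∈ univ.erase i, (θ j - cs j) :=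
  sum_congr rfl fun j hj => by rw [update_of_ne (ne_of_mem_erase hj)]

variable {c cs θ i}

lemma le_sum_iff_nonneg_sum_erase_sub (hsum : ∑ j, cs j = c) (hθi : θ i = cs i) :
    c ≤ ∑ j, θ j ↔ 0 ≤ ∑ j ∈ univ.erase i, (θ j - cs j) := by
  have hgap : ∑ j, θ j - c = ∑ j ∈ univ.erase i, (θ j - cs j) := by
    rw [← hsum, ← sum_sub_distrib, ← add_sum_erase _ _ (mem_univ i), hθi, sub_self, zero_add]
  rw [← hgap, sub_nonneg]

lemma gppDecision_mul_eq_max (hsum : ∑ j, cs j = c) (hθi : θ i = cs i) :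
    gppDecision c θ * ∑ j ∈ univ.erase i, (θ j - cs j) =
      max 0 (∑ j ∈ univ.erase i, (θ j - cs j)) := by
  rw [gppDecision]
  split_ifs with hbuild
  · rw [one_mul, max_eq_right ((le_sum_iff_nonneg_sum_erase_sub hsum hθi).mp hbuild)]
  · have hneg := mt (le_sum_iff_nonneg_sum_erase_sub hsum hθi).mpr hbuild
    rw [zero_mul, max_eq_left (not_le.mp hneg).le]

lemma gppVCGtax_eq_zero_of_eq_share (hsum : ∑ j, cs j = c) (hθi : θ i = cs i) :
    gppVCGtax c cs θ i = 0 := by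
  rw [gppVCGtax, gppDecision_mul_eq_max hsum hθi, sub_self]

end

theorem general_public_project_no_pay_only_dominance_general
    {k : ℕ} (c : ℝ)
    (cs : Fin (k + 1) → ℝ) (hcs : ∀ i, 0 < cs i) (hsum : ∑ i, cs i = c)
    (h : Fin (k + 1) → (Fin k → ℝ) → ℝ)
    (t' : (Fin (k + 1) → ℝ) → Fin (k + 1) → ℝ)
    (ht' : ∀ θ i, t' θ i =
      gppDecision c θ * (∑ j ∈ Finset.univ.erase i, (θ j - cs j)) +
        h i (θ ∘ i.succAbove))
    (hpayonly : ∀ θ : Fin (k + 1) → ℝ, (∀ i, θ i ∈ Set.Icc 0 c) →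
      ∀ i, t' θ i ≤ 0)
    (hdom : ∀ θ : Fin (k + 1) → ℝ, (∀ i, θ i ∈ Set.Icc 0 c) →
      ∀ i, gppVCGtax c cs θ i ≤ t' θ i) :
    ∀ θ : Fin (k + 1) → ℝ, (∀ i, θ i ∈ Set.Icc 0 c) →
      ∀ i, t' θ i = gppVCGtax c cs θ i := by
  intro θ hθ i
  set θ' := update θ i (cs i)
  have hshare_le : cs i ≤ c := hsum ▸ single_le_sum (fun j _ => (hcs j).le) (mem_univ i)
  have hθ' : ∀ j, θ' j ∈ Set.Icc 0 c :=
    (forall_update_iff θ fun _ x => x ∈ Set.Icc 0 c).mpr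
      ⟨⟨(hcs i).le, hshare_le⟩, fun j _ => hθ j⟩
  have hθ'i : θ' i = cs i := update_self i (cs i) θ
  have hzero : t' θ' i = 0 :=
    le_antisymm (hpayonly θ' hθ' i)
      (gppVCGtax_eq_zero_of_eq_share hsum hθ'i ▸ hdom θ' hθ' i)
  have hh : h i (θ ∘ i.succAbove) = -max 0 (∑ j ∈ univ.erase i, (θ j - cs j)) := by
    have hgroves := ht' θ' i
    rw [hzero, gppDecision_mul_eq_max hsum hθ'i, sum_erase_update_sub,
      update_comp_eq_of_forall_ne θ (cs i) i.succAbove_ne] at hgroves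
    linarith
  rw [ht', hh, gppVCGtax]
  ring

/-- in the general public project problem (`k + 1 ≥ 2` players,
cost shares `cs i > 0` summing to `c`), no pay-only Groves mechanism dominates
VCG: if the Groves mechanism given by `h` (taxes
`t' i θ = f(θ)·∑_{j≠i}(θ_j − cs_j) + h i (θ_{-i})`) satisfies `t' i θ ≤ 0` and
`t' i θ ≥ t_i^{VCG}(θ)` for all `i` and all `θ ∈ [0,c]^n`, then `t' = t^{VCG}`
on `[0,c]^n`. -/
theorem general_public_project_no_pay_only_dominance
    {k : ℕ} (hk : 1 ≤ k) (c : ℝ) (hc : 0 < c)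
    (cs : Fin (k + 1) → ℝ) (hcs : ∀ i, 0 < cs i) (hsum : ∑ i, cs i = c)
    (h : Fin (k + 1) → (Fin k → ℝ) → ℝ)
    (t' : (Fin (k + 1) → ℝ) → Fin (k + 1) → ℝ)
    (ht' : ∀ θ i, t' θ i =
      gppDecision c θ * (∑ j ∈ Finset.univ.erase i, (θ j - cs j)) +
        h i (θ ∘ i.succAbove))
    (hpayonly : ∀ θ : Fin (k + 1) → ℝ, (∀ i, θ i ∈ Set.Icc 0 c) →
      ∀ i, t' θ i ≤ 0)
    (hdom : ∀ θ : Fin (k + 1) → ℝ, (∀ i, θ i ∈ Set.Icc 0 c) →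
      ∀ i, gppVCGtax c cs θ i ≤ t' θ i) :
    ∀ θ : Fin (k + 1) → ℝ, (∀ i, θ i ∈ Set.Icc 0 c) →
      ∀ i, t' θ i = gppVCGtax c cs θ i :=
  general_public_project_no_pay_only_dominance_general c cs hcs hsum h t' ht' hpayonly hdom
end

section
/- For every n ≥ 3 there exists an instance of the general public project problem with n players (a cost c and cost shares c_1, ..., c_n > 0 summing to c) such that the Bailey-Cavallo mechanism dominates the VCG mechanism, i.e., for some player i and some profile θ_{-i}, S_i^{BCGC}(θ_{-i}) = max_{θ'_i} Σ_k t_k^{VCG}(θ'_i, θ_{-i}) < 0. -/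
/-!
Every VCG tax is nonpositive, so the total tax is at most the tax of any single player. Fix the
other players' types so that their net welfare `W` from the project is negative. If the project is
built, player `i` is pivotal and his tax is `W`, whatever his report; if it is not, a player `k`
carrying a large cost share is pivotal, and the others value the project enough that `k`'s tax is
at most `W`. So the total tax never exceeds `W < 0`, and it equals `W` at `θ'_i = c`, where the
project is built and nobody but `i` is pivotal. The instance needs three players: `i`, the cost
bearer `k`, and a player `m` who values the project highly.
-/

open Finset Function

/-- `∑_{j ≠ i} v_j(1, θ_j)`, the welfare of the players other than `i` if the project is built. -/
noncomputable def gppWelfareOthers {n : ℕ} (cs θ : Fin n → ℝ) (i : Fin n) : ℝ :=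
  ∑ j ∈ univ.erase i, (θ j - cs j)

section

variable {n : ℕ} {c : ℝ} {cs θ : Fin n → ℝ} {i k : Fin n}

theorem gppWelfareOthers_eq (cs θ : Fin n → ℝ) (i : Fin n) :
    gppWelfareOthers cs θ i = (∑ j, θ j - ∑ j, cs j) - (θ i - cs i) := by
  rw [gppWelfareOthers, sum_erase_eq_sub (mem_univ i), sum_sub_distrib]

theorem gppWelfareOthers_update_self (t : ℝ) :
    gppWelfareOthers cs (update θ i t) i = gppWelfareOthers cs θ i :=
  sum_congr rfl fun _ hj => by rw [update_of_ne (ne_of_mem_erase hj)]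

theorem gppWelfareOthers_update_of_ne (hki : k ≠ i) (t : ℝ) :
    gppWelfareOthers cs (update θ i t) k = gppWelfareOthers cs θ k + (t - θ i) := by
  rw [gppWelfareOthers_eq, gppWelfareOthers_eq, update_of_ne hki,
    sum_update_of_mem (mem_univ i), ← erase_eq, sum_erase_eq_sub (mem_univ i)]
  ring

theorem gppVCGtax_of_le (h : c ≤ ∑ j, θ j) :
    gppVCGtax c cs θ i = min 0 (gppWelfareOthers cs θ i) := by
  rw [gppVCGtax, gppDecision, if_pos h, one_mul, ← gppWelfareOthers]
  rcases le_total 0 (gppWelfareOthers cs θ i) with hw | hw <;> simp [hw]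

theorem gppVCGtax_of_lt (h : ∑ j, θ j < c) :
    gppVCGtax c cs θ i = -max 0 (gppWelfareOthers cs θ i) := by
  rw [gppVCGtax, gppDecision, if_neg h.not_ge, zero_mul, zero_sub, ← gppWelfareOthers]

theorem gppVCGtax_nonpos : gppVCGtax c cs θ i ≤ 0 := by
  rcases le_or_gt c (∑ j, θ j) with h | h
  · rw [gppVCGtax_of_le h]; exact min_le_left _ _
  · rw [gppVCGtax_of_lt h, neg_nonpos]; exact le_max_left _ _

theorem sum_gppVCGtax_le (c : ℝ) (cs θ : Fin n → ℝ) (i : Fin n) :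
    ∑ k, gppVCGtax c cs θ k ≤ gppVCGtax c cs θ i := by
  rw [← add_sum_erase _ _ (mem_univ i)]
  exact add_le_of_nonpos_right (sum_nonpos fun _ _ => gppVCGtax_nonpos)

theorem sum_gppVCGtax_update_le (hneg : gppWelfareOthers cs θ i < 0) (hki : k ≠ i)
    (hk : -gppWelfareOthers cs θ i ≤ gppWelfareOthers cs θ k - θ i) {t : ℝ} (ht : 0 ≤ t) :
    ∑ j, gppVCGtax c cs (update θ i t) j ≤ gppWelfareOthers cs θ i := by
  rcases le_or_gt c (∑ j, update θ i t j) with hbuilt | hnot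
  · calc ∑ j, gppVCGtax c cs (update θ i t) j ≤ gppVCGtax c cs (update θ i t) i :=
          sum_gppVCGtax_le _ _ _ _
      _ = gppWelfareOthers cs θ i := by
          rw [gppVCGtax_of_le hbuilt, gppWelfareOthers_update_self, min_eq_right hneg.le]
  · calc ∑ j, gppVCGtax c cs (update θ i t) j ≤ gppVCGtax c cs (update θ i t) k :=
          sum_gppVCGtax_le _ _ _ _
      _ ≤ -gppWelfareOthers cs (update θ i t) k := by
          rw [gppVCGtax_of_lt hnot, neg_le_neg_iff]; exact le_max_right _ _
      _ ≤ gppWelfareOthers cs θ i := by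
          rw [gppWelfareOthers_update_of_ne hki]; linarith

theorem sum_gppVCGtax_update_cost_eq (hcs : ∀ j, 0 ≤ cs j) (hsum : ∑ j, cs j = c)
    (hθ : ∀ j ≠ i, 0 ≤ θ j) (hneg : gppWelfareOthers cs θ i ≤ 0) :
    ∑ j, gppVCGtax c cs (update θ i c) j = gppWelfareOthers cs θ i := by
  have hc : 0 ≤ c := hsum ▸ sum_nonneg fun j _ => hcs j
  have hθ' : ∀ j, 0 ≤ update θ i c j := fun j => by
    rcases eq_or_ne j i with rfl | hj
    · rwa [update_self]
    · rw [update_of_ne hj]; exact hθ j hj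
  have hle_of_mem {s : Finset (Fin n)} (hi : i ∈ s) : c ≤ ∑ j ∈ s, update θ i c j := by
    simpa using single_le_sum (fun j _ => hθ' j) hi
  have hbuilt : c ≤ ∑ j, update θ i c j := hle_of_mem (mem_univ i)
  rw [Fintype.sum_eq_single i, gppVCGtax_of_le hbuilt, gppWelfareOthers_update_self,
    min_eq_right hneg]
  intro k hki
  have hcs_erase : ∑ j ∈ univ.erase k, cs j ≤ c :=
    hsum ▸ sum_le_sum_of_subset_of_nonneg (erase_subset k univ) fun j _ _ => hcs j
  have hθ_erase := hle_of_mem (mem_erase.2 ⟨hki.symm, mem_univ i⟩)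
  rw [gppVCGtax_of_le hbuilt, min_eq_left]
  rw [gppWelfareOthers, sum_sub_distrib]
  linarith

theorem isGreatest_sum_gppVCGtax_update (hcs : ∀ j, 0 ≤ cs j) (hsum : ∑ j, cs j = c)
    (hθ : ∀ j ≠ i, 0 ≤ θ j) (hneg : gppWelfareOthers cs θ i < 0) (hki : k ≠ i)
    (hk : -gppWelfareOthers cs θ i ≤ gppWelfareOthers cs θ k - θ i) :
    IsGreatest {x | ∃ θi' ∈ Set.Icc 0 c, x = ∑ j, gppVCGtax c cs (update θ i θi') j}
      (gppWelfareOthers cs θ i) := by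
  have hc : 0 ≤ c := hsum ▸ sum_nonneg fun j _ => hcs j
  refine ⟨⟨c, ⟨hc, le_rfl⟩, (sum_gppVCGtax_update_cost_eq hcs hsum hθ hneg.le).symm⟩, ?_⟩
  rintro _ ⟨t, ht, rfl⟩
  exact sum_gppVCGtax_update_le hneg hki hk ht.1

end

/-- for every `n ≥ 3` there is an instance of the general
public project problem with `n` players (a cost `c` and positive cost shares
summing to `c`) for which the Bailey-Cavallo mechanism dominates VCG: for
some player `i` and some profile `θ` of types in `[0,c]`,
`S_i^{BCGC}(θ_{-i}) = max_{θ'_i ∈ [0,c]} ∑_k t_k^{VCG}(θ'_i, θ_{-i})` is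
strictly negative. -/
theorem general_public_project_bc_dominates_vcg (n : ℕ) (hn : 3 ≤ n) :
    ∃ (c : ℝ) (cs : Fin n → ℝ), (∀ i, 0 < cs i) ∧ (∑ i, cs i = c) ∧
      ∃ (i : Fin n) (θ : Fin n → ℝ), (∀ j, θ j ∈ Set.Icc 0 c) ∧
        ∃ s : ℝ, s < 0 ∧
          IsGreatest
            {x : ℝ | ∃ θi' ∈ Set.Icc 0 c,
              x = ∑ k, gppVCGtax c cs (Function.update θ i θi') k} s := by
  obtain ⟨i, k, m, hki, hmi, hmk⟩ : ∃ i k m : Fin n, k ≠ i ∧ m ≠ i ∧ m ≠ k :=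
    ⟨⟨0, by omega⟩, ⟨1, by omega⟩, ⟨2, by omega⟩, by simp [Fin.ext_iff]⟩
  set cs : Fin n → ℝ := 1 + Pi.single k 2
  set θ : Fin n → ℝ := Pi.single m n
  have hcs_sum : ∑ j, cs j = n + 2 := by
    simp [cs, sum_add_distrib, add_comm]
  have hθ_sum : ∑ j, θ j = n := by simp [θ]
  have hcs_pos : ∀ j, 0 < cs j := fun j => by
    rcases eq_or_ne j k with rfl | hj <;> norm_num [cs, *]
  have hθ_mem : ∀ j, θ j ∈ Set.Icc 0 ((n : ℝ) + 2) := fun j => by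
    rcases eq_or_ne j m with rfl | hj
    · norm_num [θ]
    · norm_num [θ, hj]; positivity
  have hWi : gppWelfareOthers cs θ i = -1 := by
    rw [gppWelfareOthers_eq, hcs_sum, hθ_sum]
    norm_num [cs, θ, hki.symm, hmi.symm]
  have hWk : gppWelfareOthers cs θ k - θ i = 1 := by
    rw [gppWelfareOthers_eq, hcs_sum, hθ_sum]
    norm_num [cs, θ, hmi.symm, hmk.symm]
  refine ⟨n + 2, cs, hcs_pos, hcs_sum, i, θ, hθ_mem, -1, by norm_num, ?_⟩
  rw [← hWi]
  exact isGreatest_sum_gppVCGtax_update (fun j => (hcs_pos j).le) hcs_sum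
    (fun j _ => (hθ_mem j).1) (by rw [hWi]; norm_num) hki (by rw [hWi, hWk]; norm_num)
end

section
/- In the public project problem with equal participation costs, for any anonymous feasible Groves mechanism h' that welfare-weakly dominates VCG, the following holds at the all-c profile: h'(c, c, ..., c) = −(n−1)(c − c/n), i.e., h' agrees with the VCG function h at the profile where all n−1 other players report c. -/
/-!
At the profile where every player reports `c` the project is built, and every player's
co-players have the nonnegative surplus `S = (n-1)(c - c/n)`, so no one is pivotal and all
VCG taxes vanish. Each Groves tax there equals `S + h'(c,…,c)`, so feasibility gives
`n (S + h'(c,…,c)) ≤ 0` and welfare dominance gives `0 ≤ n (S + h'(c,…,c))`.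
-/

open Finset

theorem ppDecision_eq_one_of_le {n : ℕ} {c : ℝ} {θ : Fin n → ℝ} (h : c ≤ ∑ i, θ i) :
    ppDecision c θ = 1 :=
  if_pos h

theorem ppVCGtax_eq_zero_of_ppDecision_eq_one {n : ℕ} {c : ℝ} {θ : Fin n → ℝ} {i : Fin n}
    (hd : ppDecision c θ = 1) (hs : 0 ≤ ∑ j ∈ univ.erase i, (θ j - c / n)) :
    ppVCGtax c θ i = 0 := by
  rw [ppVCGtax, hd, max_eq_right hs, one_mul, sub_self]

section ConstantProfile

variable {k : ℕ} {c : ℝ}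

theorem ppDecision_const (hc : 0 ≤ c) : ppDecision c (fun _ : Fin (k + 1) => c) = 1 := by
  refine ppDecision_eq_one_of_le ?_
  rw [sum_const, card_univ, Fintype.card_fin, nsmul_eq_mul]
  push_cast
  nlinarith [(k.cast_nonneg : (0 : ℝ) ≤ k)]

theorem sum_erase_const_sub_share (i : Fin (k + 1)) :
    ∑ _j ∈ univ.erase i, (c - c / (k + 1)) = k * (c - c / (k + 1)) := by
  rw [sum_const, card_erase_of_mem (mem_univ i), card_univ, Fintype.card_fin,
    Nat.add_sub_cancel, nsmul_eq_mul]

theorem const_surplus_nonneg (hc : 0 ≤ c) : 0 ≤ (k : ℝ) * (c - c / (k + 1)) :=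
  mul_nonneg k.cast_nonneg
    (sub_nonneg.mpr (div_le_self hc (by linarith [(k.cast_nonneg : (0 : ℝ) ≤ k)])))

theorem sum_ppVCGtax_const (hc : 0 ≤ c) :
    ∑ i, ppVCGtax c (fun _ : Fin (k + 1) => c) i = 0 := by
  refine sum_eq_zero fun i _ => ppVCGtax_eq_zero_of_ppDecision_eq_one (ppDecision_const hc) ?_
  push_cast
  rw [sum_erase_const_sub_share]
  exact const_surplus_nonneg hc

end ConstantProfile

theorem public_project_anonymous_at_all_c_general
    {k : ℕ} (c : ℝ) (hc : 0 < c)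
    (h' : (Fin k → ℝ) → ℝ)
    (t' : (Fin (k + 1) → ℝ) → Fin (k + 1) → ℝ)
    (ht' : ∀ θ i, t' θ i =
      ppDecision c θ * (∑ j ∈ Finset.univ.erase i, (θ j - c / (k + 1))) +
        h' (θ ∘ i.succAbove))
    (hfeas : ∀ θ : Fin (k + 1) → ℝ, (∀ i, θ i ∈ Set.Icc 0 c) →
      ∑ i, t' θ i ≤ 0)
    (hwelfare : ∀ θ : Fin (k + 1) → ℝ, (∀ i, θ i ∈ Set.Icc 0 c) →
      ∑ i, ppVCGtax c θ i ≤ ∑ i, t' θ i) :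
    h' (fun _ => c) = -((k : ℝ)) * (c - c / (k + 1)) := by
  set x := (k : ℝ) * (c - c / (k + 1)) + h' (fun _ => c)
  have ht'_const : ∀ i, t' (fun _ => c) i = x := fun i => by
    rw [ht', ppDecision_const hc.le, one_mul, sum_erase_const_sub_share]
    rfl
  have hsum : ∑ i, t' (fun _ => c) i = (k + 1) * x := by
    simp only [ht'_const, sum_const, card_univ, Fintype.card_fin, nsmul_eq_mul]
    push_cast
    ring
  have hmem : ∀ i : Fin (k + 1), (fun _ => c) i ∈ Set.Icc 0 c := fun _ => ⟨hc.le, le_rfl⟩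
  have hle := hfeas _ hmem
  have hge := hwelfare _ hmem
  rw [hsum] at hle hge
  rw [sum_ppVCGtax_const hc.le] at hge
  have hx : x = 0 := by
    have hn : (0 : ℝ) < k + 1 := by positivity
    exact le_antisymm (nonpos_of_mul_nonpos_right hle hn) (nonneg_of_mul_nonneg_right hge hn)
  linarith

/-- in the public project problem with `k + 1 ≥ 2` players and
equal participation costs, any anonymous feasible Groves mechanism `h'` whose
total payment weakly welfare-dominates VCG agrees with the VCG function at
the all-`c` profile: `h'(c,...,c) = −(n−1)(c − c/n)` where `n = k + 1`. -/
theorem public_project_anonymous_at_all_c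
    {k : ℕ} (hk : 1 ≤ k) (c : ℝ) (hc : 0 < c)
    (h' : (Fin k → ℝ) → ℝ)
    (hperm : ∀ (x : Fin k → ℝ) (π : Equiv.Perm (Fin k)), h' (x ∘ π) = h' x)
    (t' : (Fin (k + 1) → ℝ) → Fin (k + 1) → ℝ)
    (ht' : ∀ θ i, t' θ i =
      ppDecision c θ * (∑ j ∈ Finset.univ.erase i, (θ j - c / (k + 1))) +
        h' (θ ∘ i.succAbove))
    (hfeas : ∀ θ : Fin (k + 1) → ℝ, (∀ i, θ i ∈ Set.Icc 0 c) →
      ∑ i, t' θ i ≤ 0)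
    (hwelfare : ∀ θ : Fin (k + 1) → ℝ, (∀ i, θ i ∈ Set.Icc 0 c) →
      ∑ i, ppVCGtax c θ i ≤ ∑ i, t' θ i) :
    h' (fun _ => c) = -((k : ℝ)) * (c - c / (k + 1)) :=
  public_project_anonymous_at_all_c_general c hc h' t' ht' hfeas hwelfare
end
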